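/- arXiv:2410.21468 — 13 statements merged into one kernel-verified Lean document; each statement's English description precedes it below -/
import Mathlib

section
/- A finite partially ordered set P admits an interval representation (an assignment of closed real intervals I_x = [l_x, r_x] to elements x such that x < y in P if and only if r_x < l_y) if and only if P contains no induced subposet isomorphic to 2+2 (four elements a, b, c, d with the only relations a < b and c < d, where {a,b} and {c,d} are incomparable pairs). -/
/-- A finite poset admits an interval representation (closed real intervals with
`x < y ↔ r x < l y`) iff it contains no induced subposet isomorphic to 2+2. -/
theorem stmt_0 {α : Type*} [Fintype α] [PartialOrder α] :
    (∃ l r : α → ℝ, (∀ x, l x ≤ r x) ∧ ∀ x y : α, x < y ↔ r x < l y) ↔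
    ¬ ∃ a b c d : α, a ≠ b ∧ a ≠ c ∧ a ≠ d ∧ b ≠ c ∧ b ≠ d ∧ c ≠ d ∧
      a < b ∧ c < d ∧
      ¬ a ≤ c ∧ ¬ c ≤ a ∧ ¬ a ≤ d ∧ ¬ d ≤ a ∧
      ¬ b ≤ c ∧ ¬ c ≤ b ∧ ¬ b ≤ d ∧ ¬ d ≤ b := by
  classical
  constructor
  · rintro ⟨l, r, _hlr, h⟩
    rintro ⟨a, b, c, d, _, _, _, _, _, _, h1, h2, _, _, nad, _, _, ncb, _, _⟩
    have r1 : r a < l b := (h a b).1 h1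
    have r2 : r c < l d := (h c d).1 h2
    have r3 : l d ≤ r a := not_lt.mp fun hh => nad (le_of_lt ((h a d).2 hh))
    have r4 : l b ≤ r c := not_lt.mp fun hh => ncb (le_of_lt ((h c b).2 hh))
    exact absurd ((r2.trans_le r3).trans (r1.trans_le r4)) (lt_irrefl _)
  · intro h22
    set D : α → Finset α := fun x => Finset.univ.filter (· < x) with hD
    have memD : ∀ z x : α, z ∈ D x ↔ z < x := by
      intro z x; simp [hD]
    -- down-sets form a chain under inclusion
    have chain : ∀ u v : α, D u ⊆ D v ∨ D v ⊆ D u := by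
      intro u v
      by_contra hc
      push_neg at hc
      obtain ⟨h1, h2⟩ := hc
      obtain ⟨a, hau, hav⟩ := Finset.not_subset.mp h1
      obtain ⟨c, hcv, hcu⟩ := Finset.not_subset.mp h2
      rw [memD] at hau hcv
      rw [memD] at hav hcu
      have nav : a ≠ v := fun he => hcu (by subst he; exact hcv.trans hau)
      have ncu2 : c ≠ u := fun he => hav (by subst he; exact hau.trans hcv)
      refine h22 ⟨a, u, c, v, ?_, ?_, nav, ?_, ?_, ?_, hau, hcv, ?_, ?_, ?_, ?_, ?_, ?_, ?_, ?_⟩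
      · exact ne_of_lt hau
      · rintro rfl; exact hav hcv
      · exact fun he => ncu2 he.symm
      · rintro rfl; exact hav hau
      · exact ne_of_lt hcv
      · exact fun hle => hav (lt_of_le_of_lt hle hcv)
      · exact fun hle => hcu (lt_of_le_of_lt hle hau)
      · exact fun hle => hav (lt_of_le_of_ne hle nav)
      · exact fun hle => hcu (lt_trans hcv (lt_of_le_of_lt hle hau))
      · exact fun hle => hav (lt_of_lt_of_le hau (le_trans hle (le_of_lt hcv)))
      · exact fun hle => hcu (lt_of_le_of_ne hle ncu2)
      · exact fun hle => hav (lt_of_lt_of_le hau hle)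
      · exact fun hle => hcu (lt_of_lt_of_le hcv hle)
    set 𝒟 : Finset (Finset α) := Finset.univ.image D with h𝒟
    have hDmem : ∀ x : α, D x ∈ 𝒟 := fun x => Finset.mem_image_of_mem D (Finset.mem_univ x)
    set L : α → ℕ := fun x => (𝒟.filter (· ⊂ D x)).card with hL
    set R : α → ℕ := fun x => (𝒟.filter (x ∉ ·)).card with hR
    -- key: x < y ↔ R x ≤ L y
    have key : ∀ x y : α, x < y ↔ R x ≤ L y := by
      intro x y
      constructor
      · intro hxy
        apply Finset.card_le_card
        intro S hS
        rw [Finset.mem_filter] at hS ⊢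
        obtain ⟨hS𝒟, hxS⟩ := hS
        refine ⟨hS𝒟, ?_⟩
        obtain ⟨w, _, rfl⟩ := Finset.mem_image.mp hS𝒟
        rcases chain w y with hsub | hsub
        · refine ⟨hsub, fun hsub' => hxS (hsub' ((memD x y).mpr hxy))⟩
        · exact absurd (hsub ((memD x y).mpr hxy)) hxS
      · intro hcard
        by_contra hxy
        have hstrict : (𝒟.filter (· ⊂ D y)) ⊂ (𝒟.filter (x ∉ ·)) := by
          refine ⟨fun S hS => ?_, fun habs => ?_⟩
          · rw [Finset.mem_filter] at hS ⊢
            obtain ⟨hS𝒟, hSsub⟩ := hS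
            exact ⟨hS𝒟, fun hxS => hxy ((memD x y).mp (hSsub.1 hxS))⟩
          · have hy : D y ∈ 𝒟.filter (x ∉ ·) :=
              Finset.mem_filter.mpr ⟨hDmem y, fun hxS => hxy ((memD x y).mp hxS)⟩
            have := Finset.mem_filter.mp (habs hy)
            exact (lt_irrefl (D y)) this.2
        have := Finset.card_lt_card hstrict
        simp only [hL, hR] at hcard
        omega
    -- l x < r x in ℕ
    have lr : ∀ x : α, L x < R x := by
      intro x
      apply Finset.card_lt_card
      refine ⟨fun S hS => ?_, fun habs => ?_⟩
      · rw [Finset.mem_filter] at hS ⊢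
        obtain ⟨hS𝒟, hSsub⟩ := hS
        exact ⟨hS𝒟, fun hxS => lt_irrefl x ((memD x x).mp (hSsub.1 hxS))⟩
      · have hx : D x ∈ 𝒟.filter (x ∉ ·) :=
          Finset.mem_filter.mpr ⟨hDmem x, fun hxS => lt_irrefl x ((memD x x).mp hxS)⟩
        have := Finset.mem_filter.mp (habs hx)
        exact (lt_irrefl (D x)) this.2
    refine ⟨fun x => (L x : ℝ), fun x => (R x : ℝ) - 1/2, ?_, ?_⟩
    · intro x
      have := lr x
      have h' : (L x : ℝ) + 1 ≤ (R x : ℝ) := by exact_mod_cast this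
      linarith
    · intro x y
      rw [key x y]
      constructor
      · intro hle
        have h' : (R x : ℝ) ≤ (L y : ℝ) := by exact_mod_cast hle
        linarith
      · intro hlt
        have h' : (R x : ℝ) < (L y : ℝ) + 1 := by linarith
        have : R x < L y + 1 := by exact_mod_cast h'
        omega
end

section
/- For a finite interval order P, the number of distinct down-sets D(z) = {x : x < z} over z ∈ X equals the number of distinct up-sets U(z) = {x : z < x} over z ∈ X. -/
/-- For a finite interval order, the number of distinct down-sets equals the number of
distinct up-sets (this common number is the magnitude). -/
theorem stmt_2 {α : Type*} [Fintype α] [PartialOrder α]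
    (h : ∃ l r : α → ℝ, (∀ x, l x ≤ r x) ∧ ∀ x y : α, x < y ↔ r x < l y) :
    (Set.range fun z : α => {x : α | x < z}).ncard =
      (Set.range fun z : α => {x : α | z < x}).ncard := by
  obtain ⟨l, r, hlr, hiff⟩ := h
  set f : α → Set α := fun z => {x | x < z} with hf
  set g : α → Set α := fun z => {x | z < x} with hg
  rcases isEmpty_or_nonempty α with hE | hN
  · simp [Set.range_eq_empty]
  -- F maps a down-set to an up-set
  set F : Set α → Set α := fun D => {x | D ⊆ f x} with hF
  -- For nonempty f w, F (f w) = g y where y has max r in f w, and w ∈ g y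
  have FA : ∀ w : α, (f w).Nonempty →
      ∃ y, y ∈ f w ∧ (∀ u ∈ f w, r u ≤ r y) ∧ F (f w) = g y ∧ w ∈ g y := by
    intro w hne
    obtain ⟨y, hy, hmax⟩ := Set.exists_max_image (f w) r (Set.toFinite _) hne
    refine ⟨y, hy, hmax, ?_, hy⟩
    ext x
    constructor
    · intro hsub
      exact hsub hy
    · intro hyx u hu
      show u < x
      rw [hiff]
      exact lt_of_le_of_lt (hmax u hu) ((hiff y x).1 hyx)
  -- Injectivity key: equal F-images force mutual inclusion
  have key : ∀ w w' : α, (f w).Nonempty → (f w').Nonempty →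
      F (f w) = F (f w') → f w' ⊆ f w := by
    intro w w' hne hne' hFeq
    obtain ⟨y, hy, _, hFy, hwy⟩ := FA w hne
    obtain ⟨y', hy', hmax', hFy', hwy'⟩ := FA w' hne'
    have hgy : g y = g y' := by rw [← hFy, ← hFy', hFeq]
    have hy'w : y' ∈ f w := by
      have : w ∈ g y' := by rw [← hgy]; exact hwy
      exact this
    intro u hu
    show u < w
    rw [hiff]
    exact lt_of_le_of_lt (hmax' u hu) ((hiff y' w).1 hy'w)
  -- Surjectivity: any nonempty up-set g z is F (f w) for w with minimal l in g z
  have FC : ∀ z : α, (g z).Nonempty → ∃ w, (f w).Nonempty ∧ F (f w) = g z := by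
    intro z hne
    obtain ⟨w, hw, hmin⟩ := Set.exists_min_image (g z) l (Set.toFinite _) hne
    refine ⟨w, ⟨z, hw⟩, ?_⟩
    ext x
    constructor
    · intro hsub
      exact hsub hw
    · intro hzx u hu
      show u < x
      rw [hiff]
      exact lt_of_lt_of_le ((hiff u w).1 hu) (hmin x hzx)
  -- The bijection between nonempty down-sets and nonempty up-sets
  set S : Set (Set α) := Set.range f \ {∅} with hS
  set T : Set (Set α) := Set.range g \ {∅} with hT
  have hMaps : Set.MapsTo F S T := by
    rintro D ⟨⟨w, rfl⟩, hDne⟩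
    have hne : (f w).Nonempty := Set.nonempty_iff_ne_empty.2 (by simpa using hDne)
    obtain ⟨y, hy, _, hFy, hwy⟩ := FA w hne
    exact ⟨⟨y, hFy.symm⟩, by
      simp only [Set.mem_singleton_iff]
      rw [hFy]
      exact Set.nonempty_iff_ne_empty.1 ⟨w, hwy⟩⟩
  have hInj : Set.InjOn F S := by
    rintro D ⟨⟨w, rfl⟩, hDne⟩ D' ⟨⟨w', rfl⟩, hDne'⟩ hFeq
    have hne : (f w).Nonempty := Set.nonempty_iff_ne_empty.2 (by simpa using hDne)
    have hne' : (f w').Nonempty := Set.nonempty_iff_ne_empty.2 (by simpa using hDne')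
    exact Set.Subset.antisymm (key w' w hne' hne hFeq.symm) (key w w' hne hne' hFeq)
  have hSurj : Set.SurjOn F S T := by
    rintro U ⟨⟨z, rfl⟩, hUne⟩
    have hne : (g z).Nonempty := Set.nonempty_iff_ne_empty.2 (by simpa using hUne)
    obtain ⟨w, hwne, hFw⟩ := FC z hne
    exact ⟨f w, ⟨⟨w, rfl⟩, by simpa using Set.nonempty_iff_ne_empty.1 hwne⟩, hFw⟩
  have hBij : Set.BijOn F S T := ⟨hMaps, hInj, hSurj⟩
  have hST : S.ncard = T.ncard := by
    rw [← hBij.image_eq, Set.ncard_image_of_injOn hInj]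
  -- ∅ is in both ranges
  have hemptyD : (∅ : Set α) ∈ Set.range f := by
    obtain ⟨w, hw⟩ := Finite.exists_min l
    refine ⟨w, ?_⟩
    ext x
    simp only [Set.mem_empty_iff_false, iff_false]
    intro hx
    have : r x < l w := (hiff x w).1 hx
    exact absurd (hw x) (not_le.2 (lt_of_le_of_lt (hlr x) this))
  have hemptyU : (∅ : Set α) ∈ Set.range g := by
    obtain ⟨w, hw⟩ := Finite.exists_max r
    refine ⟨w, ?_⟩
    ext x
    simp only [Set.mem_empty_iff_false, iff_false]
    intro hx
    have : r w < l x := (hiff w x).1 hx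
    exact absurd (hw x) (not_le.2 (lt_of_lt_of_le this (hlr x)))
  have h1 : S.ncard + 1 = (Set.range f).ncard :=
    Set.ncard_diff_singleton_add_one hemptyD (Set.finite_range f)
  have h2 : T.ncard + 1 = (Set.range g).ncard :=
    Set.ncard_diff_singleton_add_one hemptyU (Set.finite_range g)
  omega
end

section
/- Let R = {[l_x, r_x] : x ∈ X} be a natural (nonnegative-integer endpoint) interval representation of an interval order P (meaning x < y iff r_x + 1 ≤ l_y), and let i < j be integers such that no interval endpoint lies strictly between i and j, and i is not the right endpoint of any interval. Then the family obtained by replacing every endpoint q ≥ j by q − (j − i) (leaving endpoints ≤ i unchanged) is again an interval representation of P, it has fewer distinct endpoints, and no interval length increases. -/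
/-
Shifting every endpoint `q ≥ j` down by `j - i` is order preserving on the endpoints, and it
is strictly order preserving from right endpoints to left endpoints: the only pair it could
merge is `i` with `j`, and `i` is not a right endpoint. Since `i` and `j` are both endpoints and
are merged, the number of distinct endpoints drops; lengths cannot grow because a point moves
only if every larger point moves by the same amount.
-/

def collapseGap (i j q : ℕ) : ℕ := if j ≤ q then q - (j - i) else q

lemma collapseGap_le_collapseGap {i j p q : ℕ} (hp : p ≤ i ∨ j ≤ p)
    (hq : q ≤ i ∨ j ≤ q) (hpq : p ≤ q) : collapseGap i j p ≤ collapseGap i j q := by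
  unfold collapseGap
  split_ifs <;> omega

lemma collapseGap_lt_collapseGap_iff {i j p q : ℕ} (hp : p < i ∨ j ≤ p)
    (hq : q ≤ i ∨ j ≤ q) :
    collapseGap i j p < collapseGap i j q ↔ p < q := by
  unfold collapseGap
  split_ifs <;> omega

lemma collapseGap_sub_collapseGap_le (i j : ℕ) {p q : ℕ} (hpq : p ≤ q) :
    collapseGap i j q - collapseGap i j p ≤ q - p := by
  unfold collapseGap
  split_ifs <;> omega

lemma collapseGap_left_eq_right {i j : ℕ} (hij : i < j) :
    collapseGap i j i = collapseGap i j j := by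
  unfold collapseGap
  split_ifs <;> omega

lemma ncard_image_collapseGap_lt {S : Set ℕ} (hS : S.Finite) {i j : ℕ} (hij : i < j)
    (hi : i ∈ S) (hj : j ∈ S) : (collapseGap i j '' S).ncard < S.ncard :=
  (Set.ncard_image_le hS).lt_of_ne fun h =>
    hij.ne (Set.injOn_of_ncard_image_eq h hS hi hj (collapseGap_left_eq_right hij))

/-- Collapsing a gap `[i,j]` (with `i` not a right endpoint) of a natural representation
yields a representation of the same interval order with strictly fewer distinct
endpoints, with no interval length increasing. -/
theorem stmt_3 {α : Type*} [Fintype α] [PartialOrder α] (l r : α → ℕ)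
    (hlr : ∀ x, l x ≤ r x) (hrep : ∀ x y : α, x < y ↔ r x + 1 ≤ l y)
    (i j : ℕ) (hij : i < j)
    (hi_ep : ∃ x, l x = i ∨ r x = i)
    (hj_ep : ∃ x, l x = j ∨ r x = j)
    (hgap : ∀ x, ¬(i < l x ∧ l x < j) ∧ ¬(i < r x ∧ r x < j))
    (hi_not_right : ∀ x, r x ≠ i)
    (l' r' : α → ℕ)
    (hl' : ∀ x, l' x = if j ≤ l x then l x - (j - i) else l x)
    (hr' : ∀ x, r' x = if j ≤ r x then r x - (j - i) else r x) :
    (∀ x, l' x ≤ r' x) ∧ (∀ x y : α, x < y ↔ r' x + 1 ≤ l' y) ∧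
    (Set.range l' ∪ Set.range r').ncard < (Set.range l ∪ Set.range r).ncard ∧
    (∀ x, r' x - l' x ≤ r x - l x) := by
  obtain rfl : l' = collapseGap i j ∘ l := funext hl'
  obtain rfl : r' = collapseGap i j ∘ r := funext hr'
  have hl_out : ∀ x, l x ≤ i ∨ j ≤ l x := fun x => by have := hgap x; omega
  have hr_out : ∀ x, r x < i ∨ j ≤ r x := fun x => by
    have := hgap x; have := hi_not_right x; omega
  have hi : i ∈ Set.range l ∪ Set.range r := by
    obtain ⟨x, hx | hx⟩ := hi_ep
    exacts [Or.inl ⟨x, hx⟩, absurd hx (hi_not_right x)]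
  have hj : j ∈ Set.range l ∪ Set.range r := by
    obtain ⟨x, hx | hx⟩ := hj_ep
    exacts [Or.inl ⟨x, hx⟩, Or.inr ⟨x, hx⟩]
  refine ⟨fun x => collapseGap_le_collapseGap (hl_out x) ((hr_out x).imp le_of_lt id) (hlr x),
    fun x y => ?_, ?_, fun x => collapseGap_sub_collapseGap_le i j (hlr x)⟩
  · rw [hrep, Function.comp_apply, Function.comp_apply, ← Nat.lt_iff_add_one_le,
      ← Nat.lt_iff_add_one_le, collapseGap_lt_collapseGap_iff (hr_out x) (hl_out y)]
  · rw [Set.range_comp, Set.range_comp, ← Set.image_union]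
    exact ncard_image_collapseGap_lt ((Set.finite_range l).union (Set.finite_range r)) hij hi hj
end

section
/- A family R of integer intervals with endpoints in {0, 1, ..., m−1} is the canonical (minimal-endpoint) representation of an interval order of magnitude m if and only if every integer i with 0 ≤ i ≤ m−1 is the left endpoint of some interval of R and also the right endpoint of some interval of R. -/
/-- A family of integer intervals with endpoints in `{0,…,m−1}` is the canonical
(minimal-endpoint) representation of an interval order of magnitude `m` iff every
`i ∈ {0,…,m−1}` is both a left endpoint and a right endpoint of some interval.
(The magnitude is the number of distinct down-sets of the induced interval order.) -/
theorem stmt_4 {α : Type*} [Fintype α] (m : ℕ) (hm : 1 ≤ m) (l r : α → ℕ)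
    (hlr : ∀ x, l x ≤ r x) (hub : ∀ x, r x < m) :
    (Set.range fun z : α => {x : α | r x + 1 ≤ l z}).ncard = m ↔
      ∀ i < m, (∃ x, l x = i) ∧ (∃ x, r x = i) := by
  set g : ℕ → Set α := fun a => {x : α | r x + 1 ≤ a} with hg
  have hrange_eq : (Set.range fun z : α => {x : α | r x + 1 ≤ l z}) = g '' Set.range l := by
    rw [← Set.range_comp]; rfl
  have hsub : Set.range l ⊆ Set.Iio m := by
    rintro _ ⟨x, rfl⟩
    exact lt_of_le_of_lt (hlr x) (hub x)
  have hfin : (Set.Iio m : Set ℕ).Finite := Set.finite_Iio m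
  have hIio : (Set.Iio m : Set ℕ).ncard = m := by
    rw [← Finset.coe_Iio, Set.ncard_coe_finset, Nat.card_Iio]
  have hfinr : (Set.range l).Finite := hfin.subset hsub
  have hmono : ∀ a b : ℕ, a ≤ b → g a ⊆ g b := by
    intro a b hab x hx
    exact le_trans hx hab
  rw [hrange_eq]
  constructor
  · intro h
    have h1 : (g '' Set.range l).ncard ≤ (Set.range l).ncard :=
      Set.ncard_image_le hfinr
    have h2 : (Set.range l).ncard ≤ (Set.Iio m : Set ℕ).ncard :=
      Set.ncard_le_ncard hsub hfin
    have hcard : (Set.range l).ncard = m := by omega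
    have hrl : Set.range l = Set.Iio m :=
      Set.eq_of_subset_of_ncard_le hsub (by omega) hfin
    have hinj : Set.InjOn g (Set.range l) :=
      Set.injOn_of_ncard_image_eq (by omega) hfinr
    intro i hi
    have hil : ∃ x, l x = i := by
      have : i ∈ Set.range l := by rw [hrl]; exact hi
      exact this
    refine ⟨hil, ?_⟩
    rcases hil with ⟨z, hz⟩
    by_cases hc : i + 1 = m
    · refine ⟨z, ?_⟩
      have := hlr z
      have := hub z
      omega
    · have hi1 : i + 1 < m := by omega
      have hmem : (i : ℕ) ∈ Set.range l := by rw [hrl]; exact hi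
      have hmem1 : (i + 1 : ℕ) ∈ Set.range l := by rw [hrl]; exact hi1
      have hne : g i ≠ g (i + 1) := by
        intro he
        exact absurd (hinj hmem hmem1 he) (by omega)
      have hss : g i ⊂ g (i + 1) :=
        (hmono i (i + 1) (by omega)).ssubset_of_ne hne
      obtain ⟨x, hx1, hx2⟩ := Set.exists_of_ssubset hss
      refine ⟨x, ?_⟩
      simp only [g, Set.mem_setOf_eq] at hx1 hx2
      omega
  · intro h
    have hrl : Set.range l = Set.Iio m := by
      refine Set.Subset.antisymm hsub ?_
      intro i hi
      rcases (h i hi).1 with ⟨x, hx⟩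
      exact ⟨x, hx⟩
    have hinj : Set.InjOn g (Set.Iio m) := by
      intro a ha b hb he
      by_contra hne
      rcases lt_trichotomy a b with hab | hab | hab
      · rcases (h a ha).2 with ⟨x, hx⟩
        have hxb : x ∈ g b := by simp only [g, Set.mem_setOf_eq]; omega
        have hxa : x ∉ g a := by simp only [g, Set.mem_setOf_eq]; omega
        rw [← he] at hxb
        exact hxa hxb
      · exact hne hab
      · rcases (h b hb).2 with ⟨x, hx⟩
        have hxa : x ∈ g a := by simp only [g, Set.mem_setOf_eq]; omega
        have hxb : x ∉ g b := by simp only [g, Set.mem_setOf_eq]; omega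
        rw [he] at hxa
        exact hxb hxa
    rw [hrl, Set.ncard_image_of_injOn hinj, hIio]
end

section
/- Let C = {[l*_x, r*_x] : x ∈ X} be the canonical representation of an interval order P and R = {[l_x, r_x] : x ∈ X} any natural representation of P. If a, b ∈ X satisfy r*_a < l*_b, then l*_b − r*_a ≤ l_b − r_a. -/
/-- If `C = {[lc x, rc x]}` is the canonical representation of an interval order and
`R = {[l x, r x]}` is any natural representation, then `rc a < lc b` implies
`lc b − rc a ≤ l b − r a`. -/
theorem stmt_5 {α : Type*} [Fintype α] [PartialOrder α] (m : ℕ) (lc rc : α → ℕ)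
    (hclr : ∀ x, lc x ≤ rc x) (hcrep : ∀ x y : α, x < y ↔ rc x + 1 ≤ lc y)
    (hcm : ∀ x, rc x < m) (hcan : ∀ i < m, (∃ x, lc x = i) ∧ (∃ x, rc x = i))
    (l r : α → ℕ) (hlr : ∀ x, l x ≤ r x) (hrep : ∀ x y : α, x < y ↔ r x + 1 ≤ l y)
    (a b : α) (hab : rc a < lc b) :
    (lc b : ℤ) - (rc a : ℤ) ≤ (l b : ℤ) - (r a : ℤ) := by
  have key : ∀ n : ℕ, ∀ a b : α, rc a < lc b → lc b - rc a = n →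
      (lc b : ℤ) - (rc a : ℤ) ≤ (l b : ℤ) - (r a : ℤ) := by
    intro n
    induction n using Nat.strong_induction_on with
    | _ n ih =>
      intro a b hab hn
      have hm1 : rc a + 1 < m :=
        lt_of_le_of_lt hab (lt_of_le_of_lt (hclr b) (hcm b))
      rcases eq_or_lt_of_le (Nat.succ_le_of_lt hab) with heq | hlt
      · -- base case: rc a + 1 = lc b
        have h1 : a < b := (hcrep a b).mpr (le_of_eq heq)
        have h2 : r a + 1 ≤ l b := (hrep a b).mp h1
        omega
      · -- inductive step
        obtain ⟨c, hc⟩ := (hcan (rc a + 1) hm1).2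
        obtain ⟨z, hz⟩ := (hcan (rc a + 1) hm1).1
        have haz : a < z := (hcrep a z).mpr (by omega)
        have hncz : ¬ c < z := by
          intro h
          have := (hcrep c z).mp h
          omega
        have h1 : r a + 1 ≤ l z := (hrep a z).mp haz
        have h2 : l z ≤ r c := by
          by_contra h
          exact hncz ((hrep c z).mpr (by omega))
        have hcb : rc c < lc b := by omega
        have hih := ih (lc b - rc c) (by omega) c b hcb rfl
        omega
  exact key _ a b hab rfl
end

section
/- Let C = {[l*_x, r*_x] : x ∈ X} be the canonical representation of an interval order P. Then for every natural representation R = {[l_x, r_x] : x ∈ X} of P and every x ∈ X, one has r*_x ≤ r_x and l*_x ≤ l_x. That is, the canonical representation simultaneously minimizes all left and right endpoints. -/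
/-- The canonical representation simultaneously minimizes all left and right endpoints
among natural representations of an interval order. -/
theorem stmt_6 {α : Type*} [Fintype α] [PartialOrder α] (m : ℕ) (lc rc : α → ℕ)
    (hclr : ∀ x, lc x ≤ rc x) (hcrep : ∀ x y : α, x < y ↔ rc x + 1 ≤ lc y)
    (hcm : ∀ x, rc x < m) (hcan : ∀ i < m, (∃ x, lc x = i) ∧ (∃ x, rc x = i))
    (l r : α → ℕ) (hlr : ∀ x, l x ≤ r x) (hrep : ∀ x y : α, x < y ↔ r x + 1 ≤ l y) :
    ∀ x : α, rc x ≤ r x ∧ lc x ≤ l x := by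
  have key : ∀ n, (∀ x, lc x ≤ n → lc x ≤ l x) ∧ (∀ x, rc x ≤ n → rc x ≤ r x) := by
    intro n
    induction n using Nat.strong_induction_on with
    | _ n ih =>
      have hA : ∀ x, lc x ≤ n → lc x ≤ l x := by
        intro x hx
        rcases Nat.eq_zero_or_pos (lc x) with h0 | h0
        · omega
        · obtain ⟨y, hy⟩ := (hcan (lc x - 1) (by have := hcm x; have := hclr x; omega)).2
          have hyx : y < x := (hcrep y x).2 (by omega)
          have h1 := (hrep y x).1 hyx
          have hrc : rc y ≤ r y := (ih (lc x - 1) (by omega)).2 y (le_of_eq hy)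
          omega
      refine ⟨hA, ?_⟩
      intro x hx
      by_contra hcon
      push_neg at hcon
      obtain ⟨y, hy⟩ := (hcan (r x + 1) (by have := hcm x; omega)).1
      have hly : lc y ≤ l y := hA y (by omega)
      have hxy : x < y := (hrep x y).2 (by omega)
      have := (hcrep x y).1 hxy
      omega
  intro x
  exact ⟨(key (rc x)).2 x le_rfl, (key (lc x)).1 x le_rfl⟩
end

section
/- (Slack Theorem) Define, for an integral representation R of interval order P and a pair (x,y) with y not less than x: s_R(x,y) = l_y − r_x − 1 if x < y; s_R(x,y) = r_y − l_x if x and y are incomparable and distinct; and s_R(x,x) = r_x − l_x. Then for the canonical representation C and any integral representation R of P, s_C(x,y) ≤ s_R(x,y) for all such pairs (x,y). -/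
/-- Slack Theorem: every slack value in the canonical representation is at most the
corresponding slack value in any integral representation. -/
theorem stmt_7 {α : Type*} [Fintype α] [PartialOrder α] (m : ℕ) (lc rc : α → ℕ)
    (hclr : ∀ x, lc x ≤ rc x) (hcrep : ∀ x y : α, x < y ↔ rc x + 1 ≤ lc y)
    (hcm : ∀ x, rc x < m) (hcan : ∀ i < m, (∃ x, lc x = i) ∧ (∃ x, rc x = i))
    (l r : α → ℤ) (hlr : ∀ x, l x ≤ r x) (hrep : ∀ x y : α, x < y ↔ r x + 1 ≤ l y) :
    (∀ x y : α, x < y → (lc y : ℤ) - (rc x : ℤ) - 1 ≤ l y - r x - 1) ∧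
    (∀ x y : α, x ≠ y → ¬ x < y → ¬ y < x →
      (rc y : ℤ) - (lc x : ℤ) ≤ r y - l x) ∧
    (∀ x : α, (rc x : ℤ) - (lc x : ℤ) ≤ r x - l x) := by
  have F0 : ∀ x y : α, lc x ≤ rc y → (l x : ℤ) ≤ r y := by
    intro x y h
    by_contra hc
    push_neg at hc
    have hyx : y < x := (hrep y x).2 (by linarith)
    have := (hcrep y x).1 hyx
    omega
  have M : ∀ d : ℕ, ∀ w z : α, rc z = lc w + d → (l w : ℤ) + d ≤ r z := by
    intro d
    induction d with
    | zero =>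
      intro w z h
      simpa using F0 w z (by omega)
    | succ d ih =>
      intro w z h
      have hm : lc w + d < m := by have := hcm z; omega
      obtain ⟨u, hu⟩ := (hcan _ hm).2
      have hm2 : lc w + d + 1 < m := by have := hcm z; omega
      obtain ⟨v, hv⟩ := (hcan _ hm2).1
      have h1 : (l w : ℤ) + d ≤ r u := ih w u (by omega)
      have h2 : u < v := (hcrep u v).2 (by omega)
      have h3 : (r u : ℤ) + 1 ≤ l v := (hrep u v).1 h2
      have h4 : (l v : ℤ) ≤ r z := F0 v z (by omega)
      push_cast
      linarith
  have M' : ∀ d : ℕ, ∀ w z : α, lc z = rc w + d + 1 → (r w : ℤ) + d + 1 ≤ l z := by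
    intro d
    induction d with
    | zero =>
      intro w z h
      have hwz : w < z := (hcrep w z).2 (by omega)
      have := (hrep w z).1 hwz
      push_cast
      linarith
    | succ d ih =>
      intro w z h
      have hm : rc w + d + 1 < m := by
        have := hcm z; have := hclr z; omega
      obtain ⟨v, hv⟩ := (hcan _ hm).1
      obtain ⟨u, hu⟩ := (hcan _ hm).2
      have h1 : (r w : ℤ) + d + 1 ≤ l v := ih w v hv
      have h2 : (l v : ℤ) ≤ r u := F0 v u (by omega)
      have h3 : u < z := (hcrep u z).2 (by omega)
      have h4 : (r u : ℤ) + 1 ≤ l z := (hrep u z).1 h3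
      push_cast
      linarith
  refine ⟨?_, ?_, ?_⟩
  · intro x y hxy
    have h := (hcrep x y).1 hxy
    have key := M' (lc y - rc x - 1) x y (by omega)
    have hcast : ((lc y - rc x - 1 : ℕ) : ℤ) = (lc y : ℤ) - rc x - 1 := by omega
    rw [hcast] at key
    linarith only [key]
  · intro x y hne hxy hyx
    have h : lc x ≤ rc y := by
      by_contra hc
      exact hyx ((hcrep y x).2 (by omega))
    have key := M (rc y - lc x) x y (by omega)
    have hcast : ((rc y - lc x : ℕ) : ℤ) = (rc y : ℤ) - lc x := by omega
    rw [hcast] at key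
    linarith only [key]
  · intro x
    have key := M (rc x - lc x) x x (by have := hclr x; omega)
    have hcast : ((rc x - lc x : ℕ) : ℤ) = (rc x : ℤ) - lc x := by
      have := hclr x; omega
    rw [hcast] at key
    linarith
end

section
/- (Converse Slack Theorem) Let C be the canonical representation of interval order P and R an integral representation of P. If for every pair (x,y) with y not below x, s_C(x,y) = 0 implies s_R(x,y) = 0, then R is obtained from C by adding a single fixed integer t to every interval endpoint of C. -/
/-!
In the canonical representation every point `0, …, m-1` is both a left and a right endpoint.
Zero slack on a pair `(x, x)` or on an incomparable pair forces `r z = l x` in `R` whenever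
`rc z = lc x`, and zero slack on a comparable pair whose canonical endpoints are adjacent forces
consecutive canonical points to stay consecutive in `R`. Hence, by induction along `0, …, m-1`,
`R` is the canonical representation shifted by the image `t` of the point `0`.
-/

section IntervalRepresentation

variable {α : Type*} [PartialOrder α] {lc rc : α → ℕ} {l r : α → ℤ}

theorem right_eq_left_of_canonical_right_eq_left (hclr : ∀ x, lc x ≤ rc x)
    (hcrep : ∀ x y : α, x < y ↔ rc x + 1 ≤ lc y)
    (h2 : ∀ x y : α, x ≠ y → ¬ x < y → ¬ y < x →
      (rc y : ℤ) - (lc x : ℤ) = 0 → r y - l x = 0)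
    (h3 : ∀ x : α, (rc x : ℤ) - (lc x : ℤ) = 0 → r x - l x = 0)
    {z x : α} (hzx : rc z = lc x) : r z = l x := by
  by_cases hz : z = x
  · subst hz
    linarith [h3 z (by omega)]
  · have hnxz : ¬ x < z := by
      rw [hcrep]
      have := hclr z
      have := hclr x
      omega
    have hnzx : ¬ z < x := by
      rw [hcrep]
      omega
    linarith [h2 x z (Ne.symm hz) hnxz hnzx (by omega)]

theorem right_eq_canonical_right_add {m : ℕ} (hcrep : ∀ x y : α, x < y ↔ rc x + 1 ≤ lc y)
    (hcan : ∀ i < m, (∃ x, lc x = i) ∧ (∃ x, rc x = i))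
    (h1 : ∀ x y : α, x < y → (lc y : ℤ) - (rc x : ℤ) - 1 = 0 → l y - r x - 1 = 0)
    (hkey : ∀ z x : α, rc z = lc x → r z = l x) {w : α} (hw : lc w = 0)
    {z : α} (hz : rc z < m) : r z = rc z + l w := by
  suffices ∀ i < m, ∀ z, rc z = i → r z = i + l w from this _ hz z rfl
  intro i
  induction i with
  | zero =>
    intro _ z hz
    simp [hkey z w (by rw [hz, hw])]
  | succ i ih =>
    intro hi z hz
    obtain ⟨-, z', hz'⟩ := hcan i (by omega)
    obtain ⟨⟨y, hy⟩, -⟩ := hcan (i + 1) hi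
    have hr' : r z' = i + l w := ih (by omega) z' hz'
    have hz'y : z' < y := by rw [hcrep]; omega
    -- `z'` and `y` have adjacent canonical endpoints, so their slack in `C` is zero
    have hadj := h1 z' y hz'y (by omega)
    have hzy := hkey z y (by rw [hz, hy])
    push_cast
    omega

end IntervalRepresentation

theorem stmt_8_general {α : Type*} [PartialOrder α] (m : ℕ) (lc rc : α → ℕ)
    (hclr : ∀ x, lc x ≤ rc x) (hcrep : ∀ x y : α, x < y ↔ rc x + 1 ≤ lc y)
    (hcm : ∀ x, rc x < m) (hcan : ∀ i < m, (∃ x, lc x = i) ∧ (∃ x, rc x = i))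
    (l r : α → ℤ)
    (h1 : ∀ x y : α, x < y → (lc y : ℤ) - (rc x : ℤ) - 1 = 0 → l y - r x - 1 = 0)
    (h2 : ∀ x y : α, x ≠ y → ¬ x < y → ¬ y < x →
      (rc y : ℤ) - (lc x : ℤ) = 0 → r y - l x = 0)
    (h3 : ∀ x : α, (rc x : ℤ) - (lc x : ℤ) = 0 → r x - l x = 0) :
    ∃ t : ℤ, ∀ x : α, l x = (lc x : ℤ) + t ∧ r x = (rc x : ℤ) + t := by
  have hkey : ∀ z x : α, rc z = lc x → r z = l x := fun _ _ =>
    right_eq_left_of_canonical_right_eq_left hclr hcrep h2 h3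
  rcases Nat.eq_zero_or_pos m with rfl | hm
  · exact ⟨0, fun x => absurd (hcm x) (Nat.not_lt_zero _)⟩
  obtain ⟨⟨w, hw⟩, -⟩ := hcan 0 hm
  have hright : ∀ z, r z = rc z + l w := fun z =>
    right_eq_canonical_right_add hcrep hcan h1 hkey hw (hcm z)
  refine ⟨l w, fun x => ⟨?_, hright x⟩⟩
  obtain ⟨-, z, hz⟩ := hcan (lc x) ((hclr x).trans_lt (hcm x))
  rw [← hkey z x hz, hright z, hz]

/-- Converse Slack Theorem: if every zero slack of the canonical representation is also
zero in an integral representation `R`, then `R` is a shift of the canonical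
representation by a fixed integer. -/
theorem stmt_8 {α : Type*} [Fintype α] [PartialOrder α] (m : ℕ) (lc rc : α → ℕ)
    (hclr : ∀ x, lc x ≤ rc x) (hcrep : ∀ x y : α, x < y ↔ rc x + 1 ≤ lc y)
    (hcm : ∀ x, rc x < m) (hcan : ∀ i < m, (∃ x, lc x = i) ∧ (∃ x, rc x = i))
    (l r : α → ℤ) (hlr : ∀ x, l x ≤ r x) (hrep : ∀ x y : α, x < y ↔ r x + 1 ≤ l y)
    (h1 : ∀ x y : α, x < y → (lc y : ℤ) - (rc x : ℤ) - 1 = 0 → l y - r x - 1 = 0)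
    (h2 : ∀ x y : α, x ≠ y → ¬ x < y → ¬ y < x →
      (rc y : ℤ) - (lc x : ℤ) = 0 → r y - l x = 0)
    (h3 : ∀ x : α, (rc x : ℤ) - (lc x : ℤ) = 0 → r x - l x = 0) :
    ∃ t : ℤ, ∀ x : α, l x = (lc x : ℤ) + t ∧ r x = (rc x : ℤ) + t :=
  stmt_8_general m lc rc hclr hcrep hcm hcan l r h1 h2 h3
end

section
/- (Ghouila-Houri, one direction) If every submatrix of a {0, ±1}-matrix A admits an equitable bicoloring of its columns, then A is totally unimodular. -/
open Matrix

lemma GH.mem_range_iff (x : ℤ) : x ∈ Set.range (SignType.cast : SignType → ℤ) ↔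
    x = 0 ∨ x = 1 ∨ x = -1 := by
  constructor
  · rintro ⟨s, rfl⟩; cases s <;> simp
  · rintro (rfl | rfl | rfl)
    exacts [⟨0, rfl⟩, ⟨1, rfl⟩, ⟨-1, by simp⟩]

lemma GH.ker {n : ℕ} (B : Matrix (Fin n) (Fin n) ℤ) (hd : B.det ≠ 0)
    (u : Fin n → ℤ) (h : ∀ i, ∑ j, B i j * u j = 0) : u = 0 := by
  have hm : B.mulVec u = 0 := funext fun i => by
    simpa [Matrix.mulVec, dotProduct] using h i
  have h2 : (B.det • (1 : Matrix (Fin n) (Fin n) ℤ)).mulVec u = 0 := by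
    rw [← Matrix.adjugate_mul, ← Matrix.mulVec_mulVec, hm, Matrix.mulVec_zero]
  rw [Matrix.smul_mulVec, Matrix.one_mulVec] at h2
  funext j
  have := congrFun h2 j
  simp only [Pi.smul_apply, smul_eq_mul, Pi.zero_apply] at this
  have := mul_eq_zero.mp this
  simp only [Pi.zero_apply]
  tauto

lemma GH.cramer_single {n : ℕ} (B : Matrix (Fin (n+1)) (Fin (n+1)) ℤ) (j : Fin (n+1)) :
    B.cramer (Pi.single 0 1) j =
      (-1) ^ (j : ℕ) * (B.submatrix (Fin.succAbove 0) (Fin.succAbove j)).det := by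
  rw [Matrix.cramer_apply, Matrix.det_succ_column _ j]
  rw [Fintype.sum_eq_single (0 : Fin (n+1))]
  · have hsub : (B.updateCol j (Pi.single 0 1)).submatrix (Fin.succAbove 0) (Fin.succAbove j)
        = B.submatrix (Fin.succAbove 0) (Fin.succAbove j) := by
      ext a b
      simp [Matrix.updateCol_apply, Fin.succAbove_ne j b]
    simp [hsub, Matrix.updateCol_apply]
  · intro i hi
    simp [Matrix.updateCol_apply, Pi.single_apply, hi]

/-- Ghouila-Houri (sufficiency): if every submatrix of a `{0,±1}`-matrix admits an
equitable bicoloring of its columns, then the matrix is totally unimodular. -/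
theorem stmt_10 {I J : Type*} [Fintype I] [Fintype J] [DecidableEq I] [DecidableEq J]
    (A : Matrix I J ℤ)
    (hent : ∀ i j, A i j = 0 ∨ A i j = 1 ∨ A i j = -1)
    (hbic : ∀ (R : Finset I) (C : Finset J), ∃ B ⊆ C,
      ∀ i ∈ R, |(∑ j ∈ B, A i j) - ∑ j ∈ C \ B, A i j| ≤ 1) :
    A.IsTotallyUnimodular := by
  intro k
  induction k using Nat.strong_induction_on with
  | _ k IH =>
  intro f g hf hg
  cases k with
  | zero => exact ⟨1, by simp [Matrix.det_fin_zero]⟩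
  | succ n =>
  set B : Matrix (Fin (n+1)) (Fin (n+1)) ℤ := A.submatrix f g with hB
  by_cases hd : B.det = 0
  · exact ⟨0, by simp [hd]⟩
  set v : Fin (n+1) → ℤ := B.cramer (Pi.single 0 1) with hv
  -- entries of v are in {0, 1, -1}
  have hvent : ∀ j, v j = 0 ∨ v j = 1 ∨ v j = -1 := by
    intro j
    have hdet := IH n (Nat.lt_succ_self n) (f ∘ Fin.succAbove 0) (g ∘ Fin.succAbove j)
      (hf.comp Fin.succAbove_right_injective) (hg.comp Fin.succAbove_right_injective)
    rw [← Matrix.submatrix_submatrix, ← hB, GH.mem_range_iff] at hdet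
    have hc := GH.cramer_single B j
    rw [hv, hc]
    rcases neg_one_pow_eq_or ℤ (j : ℕ) with h1 | h1 <;> rw [h1] <;>
      rcases hdet with h2 | h2 | h2 <;> rw [h2] <;> norm_num
  -- B * v = det B • e₀
  have hmv : ∀ i, ∑ j, B i j * v j = B.det * (Pi.single 0 1 : Fin (n+1) → ℤ) i := by
    intro i
    have := congrFun (Matrix.mulVec_cramer B (Pi.single (0 : Fin (n+1)) 1)) i
    simpa [Matrix.mulVec, dotProduct, hv] using this
  classical
  set S : Finset (Fin (n+1)) := Finset.univ.filter (fun j => v j ≠ 0) with hS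
  set C : Finset J := S.image g with hC
  obtain ⟨Bk, hBkC, hineq⟩ := hbic (Finset.univ.image f) C
  set S₁ : Finset (Fin (n+1)) := S.filter (fun j => g j ∈ Bk) with hS₁
  have hS₁S : S₁ ⊆ S := Finset.filter_subset _ _
  have himg1 : S₁.image g = Bk := by
    apply Finset.Subset.antisymm
    · intro x hx
      obtain ⟨j, hj, rfl⟩ := Finset.mem_image.mp hx
      exact (Finset.mem_filter.mp hj).2
    · intro x hx
      obtain ⟨j, hj, rfl⟩ := Finset.mem_image.mp (hBkC hx)
      exact Finset.mem_image.mpr ⟨j, Finset.mem_filter.mpr ⟨hj, hx⟩, rfl⟩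
  have himg2 : (S \ S₁).image g = C \ Bk := by
    apply Finset.Subset.antisymm
    · intro x hx
      obtain ⟨j, hj, rfl⟩ := Finset.mem_image.mp hx
      obtain ⟨hj1, hj2⟩ := Finset.mem_sdiff.mp hj
      refine Finset.mem_sdiff.mpr ⟨Finset.mem_image_of_mem g hj1, fun hmem => ?_⟩
      exact hj2 (Finset.mem_filter.mpr ⟨hj1, hmem⟩)
    · intro x hx
      obtain ⟨hx1, hx2⟩ := Finset.mem_sdiff.mp hx
      obtain ⟨j, hj, rfl⟩ := Finset.mem_image.mp hx1
      refine Finset.mem_image.mpr ⟨j, Finset.mem_sdiff.mpr ⟨hj, fun hmem => ?_⟩, rfl⟩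
      exact hx2 (Finset.mem_filter.mp hmem).2
  set z : Fin (n+1) → ℤ := fun j => if j ∈ S₁ then 1 else if j ∈ S then -1 else 0 with hz
  have hzsum : ∀ i, ∑ j, B i j * z j = (∑ j ∈ S₁, B i j) - ∑ j ∈ S \ S₁, B i j := by
    intro i
    rw [← Finset.sum_subset (Finset.subset_univ S) (by
      intro x _ hx
      have hx1 : x ∉ S₁ := fun h => hx (hS₁S h)
      simp [hz, hx, hx1])]
    rw [← Finset.sum_sdiff hS₁S]
    have e1 : ∑ j ∈ S₁, B i j * z j = ∑ j ∈ S₁, B i j :=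
      Finset.sum_congr rfl (fun j hj => by simp [hz, hj])
    have e2 : ∑ j ∈ S \ S₁, B i j * z j = -∑ j ∈ S \ S₁, B i j := by
      rw [← Finset.sum_neg_distrib]
      refine Finset.sum_congr rfl (fun j hj => ?_)
      obtain ⟨hj1, hj2⟩ := Finset.mem_sdiff.mp hj
      simp [hz, hj1, hj2]
    rw [e1, e2]; ring
  have hbound : ∀ i, |∑ j, B i j * z j| ≤ 1 := by
    intro i
    have h := hineq (f i) (Finset.mem_image_of_mem f (Finset.mem_univ i))
    rw [← himg2, ← himg1,
      Finset.sum_image (fun x _ y _ hxy => hg hxy),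
      Finset.sum_image (fun x _ y _ hxy => hg hxy)] at h
    rw [hzsum i]
    simpa [hB, Matrix.submatrix_apply] using h
  have hpar : ∀ i, (2:ℤ) ∣ (∑ j, B i j * z j) - ∑ j, B i j * v j := by
    intro i
    rw [← Finset.sum_sub_distrib]
    apply Finset.dvd_sum
    intro j _
    have h2 : (2:ℤ) ∣ z j - v j := by
      rcases hvent j with h | h | h
      · have hjS : j ∉ S := by simp [hS, h]
        have hjS₁ : j ∉ S₁ := fun hh => hjS (hS₁S hh)
        simp [hz, hjS, hjS₁, h]
      · have hjS : j ∈ S := by simp [hS, h]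
        by_cases hj1 : j ∈ S₁ <;> simp [hz, hj1, hjS, h] <;> omega
      · have hjS : j ∈ S := by simp [hS, h]
        by_cases hj1 : j ∈ S₁ <;> simp [hz, hj1, hjS, h] <;> omega
    have : B i j * z j - B i j * v j = B i j * (z j - v j) := by ring
    rw [this]
    exact Dvd.dvd.mul_left h2 _
  have hz0 : ∀ i : Fin (n+1), i ≠ 0 → ∑ j, B i j * z j = 0 := by
    intro i hi
    have h1 := hpar i
    rw [hmv i, Pi.single_eq_of_ne hi, mul_zero, sub_zero] at h1
    have h2 := hbound i
    rw [abs_le] at h2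
    omega
  have hSne : S.Nonempty := by
    rcases Finset.eq_empty_or_nonempty S with hSe | hSe
    · exfalso
      apply hd
      have hv0 : ∀ j, v j = 0 := by
        intro j
        by_contra h
        have : j ∈ S := by simp [hS, h]
        rw [hSe] at this
        simp at this
      have h0 := hmv 0
      simp only [hv0, mul_zero, Finset.sum_const_zero, Pi.single_eq_same, mul_one] at h0
      omega
    · exact hSe
  have h0par := hpar 0
  rw [hmv 0, Pi.single_eq_same, mul_one] at h0par
  have hb0 := hbound 0
  rw [abs_le] at hb0
  have ht3 : (∑ j, B 0 j * z j) = -1 ∨ (∑ j, B 0 j * z j) = 0 ∨ (∑ j, B 0 j * z j) = 1 := by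
    omega
  obtain ⟨j₀, hj₀⟩ := hSne
  have hvj : v j₀ = 1 ∨ v j₀ = -1 := by
    have h1 := hvent j₀
    have h2 : v j₀ ≠ 0 := by
      have := Finset.mem_filter.mp hj₀
      simpa using this.2
    rcases h1 with h | h | h
    · exact absurd h h2
    · exact Or.inl h
    · exact Or.inr h
  have hzj : z j₀ = 1 ∨ z j₀ = -1 := by
    by_cases h : j₀ ∈ S₁ <;> simp [hz, h, hj₀]
  rcases ht3 with ht | ht | ht
  rotate_left
  · -- ∑ B 0 j * z j = 0 : contradiction
    exfalso
    have hzz := GH.ker B hd z (fun i => by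
      by_cases hi : i = 0
      · subst hi; exact ht
      · exact hz0 i hi)
    have : z j₀ = 0 := congrFun hzz j₀
    rcases hzj with h | h <;> omega
  all_goals {
    -- ∑ B 0 j * z j = ε with ε = ±1
    have hzval : ∀ i, ∑ j, B i j * z j = (∑ j, B 0 j * z j) * (Pi.single 0 1 : Fin (n+1) → ℤ) i := by
      intro i
      by_cases hi : i = 0
      · subst hi; rw [Pi.single_eq_same, mul_one]
      · rw [hz0 i hi, Pi.single_eq_of_ne hi, mul_zero]
    have hker := GH.ker B hd (fun j => B.det * z j - (∑ j, B 0 j * z j) * v j) (fun i => by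
      have e : ∑ j, B i j * (B.det * z j - (∑ j', B 0 j' * z j') * v j) =
          B.det * (∑ j, B i j * z j) - (∑ j', B 0 j' * z j') * (∑ j, B i j * v j) := by
        rw [Finset.mul_sum, Finset.mul_sum, ← Finset.sum_sub_distrib]
        exact Finset.sum_congr rfl (fun j _ => by ring)
      rw [e, hzval i, hmv i]
      ring)
    have hu : B.det * z j₀ = (∑ j, B 0 j * z j) * v j₀ := by
      have := congrFun hker j₀
      simp only [Pi.zero_apply] at this
      omega
    rw [ht] at hu
    have hd1 : B.det = 1 ∨ B.det = -1 := by
      rcases hzj with h | h <;> rcases hvj with h' | h' <;> rw [h, h'] at hu <;>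
        simp only [mul_one, mul_neg, one_mul, neg_one_mul, neg_neg] at hu <;> omega
    rcases hd1 with h | h
    · exact ⟨1, by simp [h]⟩
    · exact ⟨-1, by simp [h]⟩
  }
end

section
/- The location polyhedron D_P of an interval order P—the set of vectors (l_1, r_1, ..., l_n, r_n) ∈ R^{2n} satisfying l_x ≥ 0 for minimal x, r_x + 1 ≤ l_y whenever x < y, l_x ≤ r_y whenever x ∥ y with x ≠ y, and l_x ≤ r_x for all x—has a unique vertex, namely the endpoint vector of the canonical representation of P. Moreover this vertex lies on every facet, so D_P is a pointed affine cone with apex at the canonical representation. -/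
/-!
Measure every point `p` of `D_P` against the canonical vector `c` through its slacks
`p.1 x - lc x` and `p.2 x - rc x`. List the endpoints in canonical order
`l-endpoints at 0, r-endpoints at 0, l-endpoints at 1, …`. Since the canonical representation
leaves no gaps, any two consecutive entries of this list are linked by a constraint of `D_P`
that is tight at `c`, so along the list the slacks are monotone, starting from a nonnegative
value. Hence `c` is the least element of `D_P`, and every constraint of `D_P`, which compares
an endpoint with a later one, remains valid along the ray from `c` through `p`.
-/

section Convex

variable {𝕜 E : Type*}

theorem IsLeast.mem_extremePoints [Semiring 𝕜] [PartialOrder 𝕜] [AddCommMonoid E]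
    [PartialOrder E] [IsOrderedCancelAddMonoid E] [Module 𝕜 E] [PosSMulStrictMono 𝕜 E]
    {A : Set E} {x : E} (h : IsLeast A x) : x ∈ A.extremePoints 𝕜 := by
  refine ⟨h.1, fun x₁ hx₁ x₂ hx₂ ⟨a, b, ha, hb, hab, hx⟩ => ?_⟩
  by_contra hne
  have hlt : x < x₁ := lt_of_le_of_ne (h.2 hx₁) (Ne.symm hne)
  refine lt_irrefl x ?_
  calc
    x = a • x + b • x := (Convex.combo_self hab x).symm
    _ < a • x₁ + b • x₂ := add_lt_add_of_lt_of_le (smul_lt_smul_of_pos_left hlt ha)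
        (smul_le_smul_of_nonneg_left (h.2 hx₂) hb.le)
    _ = x := hx

theorem eq_of_mem_extremePoints_of_cone [Field 𝕜] [LinearOrder 𝕜] [IsStrictOrderedRing 𝕜]
    [AddCommGroup E] [Module 𝕜 E] {A : Set E} {c u : E} (hc : c ∈ A)
    (hcone : ∀ p ∈ A, ∀ t : 𝕜, 0 ≤ t → c + t • (p - c) ∈ A) (hu : u ∈ A.extremePoints 𝕜) :
    u = c := by
  have hseg : u ∈ openSegment 𝕜 c (c + (2 : 𝕜) • (u - c)) :=
    ⟨1 / 2, 1 / 2, by norm_num, by norm_num, by norm_num, by module⟩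
  exact (hu.2 hc (hcone u hu.1 2 zero_le_two) hseg).symm

end Convex

theorem le_of_rank_lt {E β : Type*} [Preorder β] (rank : E → ℕ) (s : E → β)
    (hdown : ∀ e, ∀ k < rank e, ∃ w, rank w = k)
    (hstep : ∀ e e', rank e' = rank e + 1 → s e ≤ s e') {e e' : E} (h : rank e < rank e') :
    s e ≤ s e' := by
  obtain ⟨d, hd⟩ : ∃ d, rank e' = rank e + 1 + d := ⟨_, (Nat.add_sub_of_le h).symm⟩
  induction d generalizing e' with
  | zero => exact hstep e e' hd
  | succ d ih =>
    obtain ⟨w, hw⟩ := hdown e' (rank e + 1 + d) (by omega)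
    exact (ih (by omega) hw).trans (hstep w e' (by omega))

namespace IntervalOrder

variable {α : Type*} {m : ℕ} {lc rc : α → ℕ}

def locationPolyhedron (α : Type*) [LT α] : Set ((α → ℝ) × (α → ℝ)) :=
  {p | (∀ x : α, (∀ y : α, ¬ y < x) → 0 ≤ p.1 x) ∧
       (∀ x y : α, x < y → p.2 x + 1 ≤ p.1 y) ∧
       (∀ x y : α, x ≠ y → ¬ x < y → ¬ y < x → p.1 x ≤ p.2 y) ∧
       (∀ x : α, p.1 x ≤ p.2 x)}

structure IsCanonicalRepresentation [LT α] (m : ℕ) (lc rc : α → ℕ) : Prop where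
  left_le_right : ∀ x, lc x ≤ rc x
  lt_iff : ∀ x y : α, x < y ↔ rc x + 1 ≤ lc y
  right_lt : ∀ x, rc x < m
  exists_eq : ∀ i < m, (∃ x, lc x = i) ∧ (∃ x, rc x = i)

def endpointVector (lc rc : α → ℕ) : (α → ℝ) × (α → ℝ) :=
  (fun x => (lc x : ℝ), fun x => (rc x : ℝ))

/-- `Sum.inl x` and `Sum.inr x` stand for the left and right endpoint of `x`; at equal values
the left endpoints come first. -/
def endpointRank (lc rc : α → ℕ) : α ⊕ α → ℕ :=
  Sum.elim (fun x => 2 * lc x) (fun x => 2 * rc x + 1)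

def slack (lc rc : α → ℕ) (p : (α → ℝ) × (α → ℝ)) : α ⊕ α → ℝ :=
  Sum.elim (fun x => p.1 x - lc x) (fun x => p.2 x - rc x)

@[simp] theorem endpointRank_inl (x : α) : endpointRank lc rc (.inl x) = 2 * lc x := rfl

@[simp] theorem endpointRank_inr (x : α) : endpointRank lc rc (.inr x) = 2 * rc x + 1 := rfl

@[simp] theorem slack_inl (p : (α → ℝ) × (α → ℝ)) (x : α) :
    slack lc rc p (.inl x) = p.1 x - lc x := rfl

@[simp] theorem slack_inr (p : (α → ℝ) × (α → ℝ)) (x : α) :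
    slack lc rc p (.inr x) = p.2 x - rc x := rfl

@[simp] theorem endpointVector_fst_apply (x : α) : (endpointVector lc rc).1 x = lc x := rfl

@[simp] theorem endpointVector_snd_apply (x : α) : (endpointVector lc rc).2 x = rc x := rfl

namespace IsCanonicalRepresentation

variable [LT α] (h : IsCanonicalRepresentation m lc rc)
include h

theorem lc_le_rc_of_not_lt {x y : α} (hyx : ¬ y < x) : lc x ≤ rc y := by
  rw [h.lt_iff] at hyx
  omega

theorem lc_eq_zero_of_minimal {x : α} (hx : ∀ y, ¬ y < x) : lc x = 0 := by
  by_contra hne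
  have hm : lc x - 1 < m := by have := h.right_lt x; have := h.left_le_right x; omega
  obtain ⟨w, hw⟩ := (h.exists_eq (lc x - 1) hm).2
  exact hx w ((h.lt_iff w x).2 (by omega))

theorem exists_endpointRank_eq {e : α ⊕ α} {k : ℕ} (hk : k < endpointRank lc rc e) :
    ∃ w, endpointRank lc rc w = k := by
  have hlt : k < 2 * m := by
    rcases e with x | x <;> simp only [endpointRank_inl, endpointRank_inr] at hk <;>
      have := h.right_lt x <;> have := h.left_le_right x <;> omega
  obtain ⟨i, rfl | rfl⟩ := Nat.even_or_odd' k
  · obtain ⟨x, hx⟩ := (h.exists_eq i (by omega)).1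
    exact ⟨.inl x, by rw [endpointRank_inl, hx]⟩
  · obtain ⟨x, hx⟩ := (h.exists_eq i (by omega)).2
    exact ⟨.inr x, by rw [endpointRank_inr, hx]⟩

theorem slack_le_of_endpointRank_eq_succ {p : (α → ℝ) × (α → ℝ)} (hp : p ∈ locationPolyhedron α)
    {e e' : α ⊕ α} (hee' : endpointRank lc rc e' = endpointRank lc rc e + 1) :
    slack lc rc p e ≤ slack lc rc p e' := by
  obtain ⟨-, hsucc, hinc, hlr⟩ := hp
  rcases e with x | x <;> rcases e' with y | y <;>
    simp only [endpointRank_inl, endpointRank_inr, slack_inl, slack_inr] at hee' ⊢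
  · omega
  · have hcast : (lc x : ℝ) = rc y := by exact_mod_cast (by omega : lc x = rc y)
    have hxy : p.1 x ≤ p.2 y := by
      by_cases hxy : x = y
      · exact hxy ▸ hlr x
      · refine hinc x y hxy ?_ ?_ <;> rw [h.lt_iff] <;>
          have := h.left_le_right x <;> have := h.left_le_right y <;> omega
    linarith
  · have hcast : (lc y : ℝ) = rc x + 1 := by exact_mod_cast (by omega : lc y = rc x + 1)
    linarith [hsucc x y ((h.lt_iff x y).2 (by omega))]
  · omega

theorem slack_le_of_endpointRank_lt {p : (α → ℝ) × (α → ℝ)} (hp : p ∈ locationPolyhedron α)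
    {e e' : α ⊕ α} (hee' : endpointRank lc rc e < endpointRank lc rc e') :
    slack lc rc p e ≤ slack lc rc p e' :=
  le_of_rank_lt _ _ (fun _ _ => h.exists_endpointRank_eq)
    (fun _ _ => h.slack_le_of_endpointRank_eq_succ hp) hee'

theorem slack_nonneg {p : (α → ℝ) × (α → ℝ)} (hp : p ∈ locationPolyhedron α) (e : α ⊕ α) :
    0 ≤ slack lc rc p e := by
  have hfirst : ∀ e, endpointRank lc rc e = 0 → 0 ≤ slack lc rc p e := by
    rintro (x | x) hx <;>
      simp only [endpointRank_inl, endpointRank_inr, slack_inl, slack_inr] at hx ⊢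
    · have hmin : ∀ y, ¬ y < x := fun y hyx => by rw [h.lt_iff] at hyx; omega
      have hx0 : (lc x : ℝ) = 0 := by exact_mod_cast (by omega : lc x = 0)
      linarith [hp.1 x hmin]
    · omega
  rcases Nat.eq_zero_or_pos (endpointRank lc rc e) with he | he
  · exact hfirst e he
  · obtain ⟨w, hw⟩ := h.exists_endpointRank_eq he
    exact (hfirst w hw).trans (h.slack_le_of_endpointRank_lt hp (hw ▸ he))

theorem endpointVector_mem : endpointVector lc rc ∈ locationPolyhedron α := by
  refine ⟨fun x _ => Nat.cast_nonneg _, fun x y hxy => ?_, fun x y _ _ hyx => ?_, fun x => ?_⟩ <;>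
    simp only [endpointVector_fst_apply, endpointVector_snd_apply]
  · exact_mod_cast (h.lt_iff x y).1 hxy
  · exact_mod_cast h.lc_le_rc_of_not_lt hyx
  · exact_mod_cast h.left_le_right x

theorem isLeast_endpointVector : IsLeast (locationPolyhedron α) (endpointVector lc rc) := by
  refine ⟨h.endpointVector_mem, fun p hp => ⟨fun x => ?_, fun x => ?_⟩⟩
  · simpa [sub_nonneg] using h.slack_nonneg hp (.inl x)
  · simpa [sub_nonneg] using h.slack_nonneg hp (.inr x)

theorem add_smul_sub_mem {p : (α → ℝ) × (α → ℝ)} (hp : p ∈ locationPolyhedron α) {t : ℝ}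
    (ht : 0 ≤ t) :
    endpointVector lc rc + t • (p - endpointVector lc rc) ∈ locationPolyhedron α := by
  have hmono : ∀ {e e'}, endpointRank lc rc e < endpointRank lc rc e' →
      t * slack lc rc p e ≤ t * slack lc rc p e' := fun hee' =>
    mul_le_mul_of_nonneg_left (h.slack_le_of_endpointRank_lt hp hee') ht
  refine ⟨fun x hx => ?_, fun x y hxy => ?_, fun x y _ _ hyx => ?_, fun x => ?_⟩
  · have hx0 : (lc x : ℝ) = 0 := by exact_mod_cast h.lc_eq_zero_of_minimal hx
    show 0 ≤ (lc x : ℝ) + t * slack lc rc p (.inl x)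
    rw [hx0, zero_add]
    exact mul_nonneg ht (h.slack_nonneg hp _)
  · have hxy' := (h.lt_iff x y).1 hxy
    have hc : (rc x : ℝ) + 1 ≤ lc y := by exact_mod_cast hxy'
    have := @hmono (.inr x) (.inl y) (by simp only [endpointRank_inl, endpointRank_inr]; omega)
    show (rc x : ℝ) + t * slack lc rc p (.inr x) + 1 ≤ lc y + t * slack lc rc p (.inl y)
    linarith
  · have hyx' := h.lc_le_rc_of_not_lt hyx
    have hc : (lc x : ℝ) ≤ rc y := by exact_mod_cast hyx'
    have := @hmono (.inl x) (.inr y) (by simp only [endpointRank_inl, endpointRank_inr]; omega)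
    show (lc x : ℝ) + t * slack lc rc p (.inl x) ≤ rc y + t * slack lc rc p (.inr y)
    linarith
  · have hx := h.left_le_right x
    have hc : (lc x : ℝ) ≤ rc x := by exact_mod_cast hx
    have := @hmono (.inl x) (.inr x) (by simp only [endpointRank_inl, endpointRank_inr]; omega)
    show (lc x : ℝ) + t * slack lc rc p (.inl x) ≤ rc x + t * slack lc rc p (.inr x)
    linarith

end IsCanonicalRepresentation

end IntervalOrder

open IntervalOrder in
theorem stmt_12_general {α : Type*} [PartialOrder α] (m : ℕ) (lc rc : α → ℕ)
    (hclr : ∀ x, lc x ≤ rc x) (hcrep : ∀ x y : α, x < y ↔ rc x + 1 ≤ lc y)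
    (hcm : ∀ x, rc x < m) (hcan : ∀ i < m, (∃ x, lc x = i) ∧ (∃ x, rc x = i)) :
    let D : Set ((α → ℝ) × (α → ℝ)) :=
      {p | (∀ x : α, (∀ y : α, ¬ y < x) → 0 ≤ p.1 x) ∧
           (∀ x y : α, x < y → p.2 x + 1 ≤ p.1 y) ∧
           (∀ x y : α, x ≠ y → ¬ x < y → ¬ y < x → p.1 x ≤ p.2 y) ∧
           (∀ x : α, p.1 x ≤ p.2 x)}
    let c : (α → ℝ) × (α → ℝ) := (fun x => (lc x : ℝ), fun x => (rc x : ℝ))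
    c ∈ D ∧
    (∀ p ∈ D, ∀ t : ℝ, 0 ≤ t → c + t • (p - c) ∈ D) ∧
    c ∈ Set.extremePoints ℝ D ∧
    (∀ u ∈ Set.extremePoints ℝ D, u = c) := by
  intro D c
  have hP : IsCanonicalRepresentation m lc rc := ⟨hclr, hcrep, hcm, hcan⟩
  have hcone : ∀ p ∈ D, ∀ t : ℝ, 0 ≤ t → c + t • (p - c) ∈ D :=
    fun _ hp _ ht => hP.add_smul_sub_mem hp ht
  exact ⟨hP.endpointVector_mem, hcone, hP.isLeast_endpointVector.mem_extremePoints,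
    fun _ hu => eq_of_mem_extremePoints_of_cone hP.endpointVector_mem hcone hu⟩

/-- The location polyhedron `D_P` of an interval order is a pointed affine cone with its
apex at the endpoint vector of the canonical representation: the canonical vector lies in
`D_P`, every ray from it through a point of `D_P` stays in `D_P`, and it is the unique
vertex (extreme point) of `D_P`. -/
theorem stmt_12 {α : Type*} [Fintype α] [PartialOrder α] (m : ℕ) (lc rc : α → ℕ)
    (hclr : ∀ x, lc x ≤ rc x) (hcrep : ∀ x y : α, x < y ↔ rc x + 1 ≤ lc y)
    (hcm : ∀ x, rc x < m) (hcan : ∀ i < m, (∃ x, lc x = i) ∧ (∃ x, rc x = i)) :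
    let D : Set ((α → ℝ) × (α → ℝ)) :=
      {p | (∀ x : α, (∀ y : α, ¬ y < x) → 0 ≤ p.1 x) ∧
           (∀ x y : α, x < y → p.2 x + 1 ≤ p.1 y) ∧
           (∀ x y : α, x ≠ y → ¬ x < y → ¬ y < x → p.1 x ≤ p.2 y) ∧
           (∀ x : α, p.1 x ≤ p.2 x)}
    let c : (α → ℝ) × (α → ℝ) := (fun x => (lc x : ℝ), fun x => (rc x : ℝ))
    c ∈ D ∧
    (∀ p ∈ D, ∀ t : ℝ, 0 ≤ t → c + t • (p - c) ∈ D) ∧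
    c ∈ Set.extremePoints ℝ D ∧
    (∀ u ∈ Set.extremePoints ℝ D, u = c) :=
  stmt_12_general m lc rc hclr hcrep hcm hcan
end

section
/- If S is a subset of X that is the disjoint union of two or more fundamental extenders of an interval order P, then the characteristic vector of S is not a member of the unique minimal integral Hilbert basis of the recession cone Q*_P of the length polyhedron; conversely, every fundamental extender that is not a disjoint union of proper fundamental extenders contained in it has its characteristic vector in the unique minimal Hilbert basis. -/
/-- The recession cone `Q*_P` of the length polyhedron: differences of length vectors of
real representations (with `r x + 1 ≤ l y` whenever `x < y`) from the canonical length
vector given by `lc, rc`. -/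
def Qstar {α : Type*} [PartialOrder α] (lc rc : α → ℕ) : Set (α → ℝ) :=
  {ρ | ∃ l r : α → ℝ, (∀ x, l x ≤ r x) ∧
    (∀ x y : α, x < y → r x + 1 ≤ l y) ∧
    (∀ x y : α, r x < l y → x < y) ∧
    ∀ x, ρ x = (r x - l x) - ((rc x : ℝ) - (lc x : ℝ))}

/-- `H` is an integral Hilbert basis for `C`: a finite set of integral vectors of `C`
such that every integral vector of `C` is a nonnegative integral combination of them. -/
def IsHilbertBasis {α : Type*} (C H : Set (α → ℝ)) : Prop :=
  H.Finite ∧ H ⊆ C ∧ (∀ h ∈ H, ∀ x, ∃ z : ℤ, h x = (z : ℝ)) ∧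
  ∀ v ∈ C, (∀ x, ∃ z : ℤ, v x = (z : ℝ)) →
    ∃ (T : Finset (α → ℝ)) (c : (α → ℝ) → ℕ), ↑T ⊆ H ∧ v = ∑ h ∈ T, (c h : ℝ) • h

/-- A minimal integral Hilbert basis: no proper subset is a Hilbert basis. -/
def IsMinimalHilbertBasis {α : Type*} (C H : Set (α → ℝ)) : Prop :=
  IsHilbertBasis C H ∧ ∀ H' ⊆ H, IsHilbertBasis C H' → H' = H

/-- Characteristic vector of a subset. -/
noncomputable def chiVec {α : Type*} (S : Set α) : α → ℝ := S.indicator 1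

/-- The `i`th gap set: elements whose canonical interval contains `[i−1, i]`. -/
def gapSet {α : Type*} (lc rc : α → ℕ) (i : ℕ) : Set α :=
  {x | lc x + 1 ≤ i ∧ i ≤ rc x}

/-- The `i`th left-borderline set: elements with canonical right endpoint `i − 1`. -/
def leftBorder {α : Type*} (rc : α → ℕ) (i : ℕ) : Set α := {x | rc x + 1 = i}

/-- The `i`th right-borderline set: elements with canonical left endpoint `i`. -/
def rightBorder {α : Type*} (lc : α → ℕ) (i : ℕ) : Set α := {x | lc x = i}

/-- A fundamental extender: a nonempty set of the form `G i ∪ Z` with `Z` contained in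
the left or right borderline set of the `(i−1,i)`-gap. -/
def FundExt {α : Type*} (m : ℕ) (lc rc : α → ℕ) (S : Set α) : Prop :=
  S.Nonempty ∧ ∃ i ≤ m, ∃ Z : Set α,
    (Z ⊆ leftBorder rc i ∨ Z ⊆ rightBorder lc i) ∧ S = gapSet lc rc i ∪ Z

/-- A Hilbert set: a fundamental extender whose characteristic vector belongs to the
unique minimal integral Hilbert basis of `Q*_P`. -/
def HilbertSet {α : Type*} [PartialOrder α] (m : ℕ) (lc rc : α → ℕ) (S : Set α) : Prop :=
  FundExt m lc rc S ∧
  ∃ H : Set (α → ℝ), IsMinimalHilbertBasis (Qstar lc rc) H ∧ chiVec S ∈ H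


section Aux
variable {α : Type*}

theorem chiVec_apply (S : Set α) (x : α) [Decidable (x ∈ S)] :
    chiVec S x = if x ∈ S then 1 else 0 := by
  simp [chiVec, Set.indicator_apply]

theorem fundext_chi_mem [PartialOrder α] (m : ℕ) (lc rc : α → ℕ)
    (hclr : ∀ x, lc x ≤ rc x) (hcrep : ∀ x y : α, x < y ↔ rc x + 1 ≤ lc y)
    (S : Set α) (hS : FundExt m lc rc S) : chiVec S ∈ Qstar lc rc := by
  classical
  obtain ⟨-, i, -, Z, hZ, rfl⟩ := hS
  set s : ℕ → ℝ := fun t => if i ≤ t then (t:ℝ)+1 else (t:ℝ) with hs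
  have hs_lb : ∀ t : ℕ, (t:ℝ) ≤ s t := by
    intro t; simp only [hs]; split_ifs <;> norm_num
  have hs_ub : ∀ t : ℕ, s t ≤ (t:ℝ) + 1 := by
    intro t; simp only [hs]; split_ifs <;> norm_num
  have hs_mono : ∀ {t t' : ℕ}, t ≤ t' → s t ≤ s t' := by
    intro t t' h
    have hc : (t:ℝ) ≤ t' := by exact_mod_cast h
    simp only [hs]; split_ifs with h1 h2
    · linarith
    · exact absurd (h1.trans h) h2
    · linarith
    · linarith
  have hs_add : ∀ {t t' : ℕ}, t + 1 ≤ t' → s t + 1 ≤ s t' := by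
    intro t t' h
    have hc : (t:ℝ) + 1 ≤ t' := by exact_mod_cast h
    simp only [hs]; split_ifs with h1 h2
    · linarith
    · exact absurd (h1.trans (by omega)) h2
    · linarith
    · linarith
  have hs_reflect : ∀ {t t' : ℕ}, s t < s t' → t < t' := by
    intro t t' h
    by_contra hc
    exact absurd (hs_mono (not_lt.1 hc)) (not_le.2 h)
  rcases hZ with hZ | hZ
  · -- Z ⊆ leftBorder rc i : extend right endpoints of Z into the gap
    refine ⟨fun x => s (lc x), fun x => if x ∈ Z then (i:ℝ) else s (rc x), ?_, ?_, ?_, ?_⟩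
    · intro x
      dsimp only
      split_ifs with hx
      · have hrc : rc x + 1 = i := hZ hx
        have hlci : ¬ i ≤ lc x := by have := hclr x; omega
        simp only [hs]; rw [if_neg hlci]
        have : (lc x : ℝ) + 1 ≤ i := by exact_mod_cast (by omega : lc x + 1 ≤ i)
        linarith
      · exact hs_mono (hclr x)
    · intro x y hxy
      dsimp only
      have hxy' := (hcrep x y).1 hxy
      split_ifs with hx
      · have hrc : rc x + 1 = i := hZ hx
        have hile : i ≤ lc y := by omega
        have : (i:ℝ) ≤ lc y := by exact_mod_cast hile
        simp only [hs]; rw [if_pos hile]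
        linarith
      · exact hs_add hxy'
    · intro x y hlt
      dsimp only at hlt ⊢
      rw [hcrep]
      split_ifs at hlt with hx
      · have hrc : rc x + 1 = i := hZ hx
        have : i ≤ lc y := by
          by_contra hc
          have h1 : lc y < i := not_le.1 hc
          have h2 : s (lc y) = (lc y : ℝ) := by simp only [hs]; rw [if_neg (by omega)]
          rw [h2] at hlt
          have : (lc y : ℝ) < i := by exact_mod_cast h1
          linarith
        omega
      · have := hs_reflect hlt
        omega
    · intro x
      dsimp only
      by_cases hx : x ∈ Z
      · have hrc : rc x + 1 = i := hZ hx
        have hmem : x ∈ gapSet lc rc i ∪ Z := Set.mem_union_right _ hx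
        rw [if_pos hx, chiVec_apply, if_pos hmem]
        have hlci : ¬ i ≤ lc x := by have := hclr x; omega
        simp only [hs]; rw [if_neg hlci]
        have hi : (i:ℝ) = (rc x : ℝ) + 1 := by exact_mod_cast hrc.symm
        rw [hi]; ring
      · rw [if_neg hx, chiVec_apply]
        by_cases hg : x ∈ gapSet lc rc i
        · obtain ⟨h1, h2⟩ := hg
          have hmem : x ∈ gapSet lc rc i ∪ Z :=
            Set.mem_union_left _ (show x ∈ gapSet lc rc i from ⟨h1, h2⟩)
          rw [if_pos hmem]
          simp only [hs]
          rw [if_pos h2, if_neg (by omega : ¬ i ≤ lc x)]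
          ring
        · rw [if_neg (fun hmem => ((Set.mem_union x _ _).1 hmem).elim hg hx)]
          simp only [gapSet, Set.mem_setOf_eq, not_and_or, not_le] at hg
          simp only [hs]
          rcases hg with hg | hg
          · rw [if_pos (by have := hclr x; omega : i ≤ rc x),
              if_pos (by omega : i ≤ lc x)]
            ring
          · rw [if_neg (by omega : ¬ i ≤ rc x),
              if_neg (by have := hclr x; omega : ¬ i ≤ lc x)]
            ring
  · -- Z ⊆ rightBorder lc i : extend left endpoints of Z into the gap
    refine ⟨fun x => if x ∈ Z then (i:ℝ) else s (lc x), fun x => s (rc x), ?_, ?_, ?_, ?_⟩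
    · intro x
      dsimp only
      split_ifs with hx
      · have hlc : lc x = i := hZ hx
        have hirc : i ≤ rc x := hlc ▸ hclr x
        have : (i:ℝ) ≤ rc x := by exact_mod_cast hirc
        linarith [hs_lb (rc x)]
      · exact hs_mono (hclr x)
    · intro x y hxy
      dsimp only
      have hxy' := (hcrep x y).1 hxy
      split_ifs with hy
      · have hlc : lc y = i := hZ hy
        have h1 : ¬ i ≤ rc x := by omega
        simp only [hs]; rw [if_neg h1]
        exact_mod_cast (by omega : rc x + 1 ≤ i)
      · exact hs_add hxy'
    · intro x y hlt
      dsimp only at hlt ⊢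
      rw [hcrep]
      split_ifs at hlt with hy
      · have hlc : lc y = i := hZ hy
        have : ¬ i ≤ rc x := by
          intro hc
          have h1 : (i:ℝ) ≤ rc x := by exact_mod_cast hc
          have h2 : s (rc x) = (rc x : ℝ) + 1 := by simp only [hs]; rw [if_pos hc]
          rw [h2] at hlt; linarith
        omega
      · have := hs_reflect hlt
        omega
    · intro x
      dsimp only
      by_cases hx : x ∈ Z
      · have hlc : lc x = i := hZ hx
        have hmem : x ∈ gapSet lc rc i ∪ Z := Set.mem_union_right _ hx
        rw [if_pos hx, chiVec_apply, if_pos hmem]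
        have hirc : i ≤ rc x := hlc ▸ hclr x
        simp only [hs]; rw [if_pos hirc]
        have hi : (lc x : ℝ) = i := by exact_mod_cast hlc
        rw [hi]; ring
      · rw [if_neg hx, chiVec_apply]
        by_cases hg : x ∈ gapSet lc rc i
        · obtain ⟨h1, h2⟩ := hg
          have hmem : x ∈ gapSet lc rc i ∪ Z :=
            Set.mem_union_left _ (show x ∈ gapSet lc rc i from ⟨h1, h2⟩)
          rw [if_pos hmem]
          simp only [hs]
          rw [if_pos h2, if_neg (by omega : ¬ i ≤ lc x)]
          ring
        · rw [if_neg (fun hmem => ((Set.mem_union x _ _).1 hmem).elim hg hx)]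
          simp only [gapSet, Set.mem_setOf_eq, not_and_or, not_le] at hg
          simp only [hs]
          rcases hg with hg | hg
          · rw [if_pos (by have := hclr x; omega : i ≤ rc x),
              if_pos (by omega : i ≤ lc x)]
            ring
          · rw [if_neg (by omega : ¬ i ≤ rc x),
              if_neg (by have := hclr x; omega : ¬ i ≤ lc x)]
            ring


theorem chiVec_int (S : Set α) : ∀ x, ∃ k : ℤ, chiVec S x = (k:ℝ) := by
  classical
  intro x
  rw [chiVec_apply]
  split_ifs
  exacts [⟨1, by norm_num⟩, ⟨0, by norm_num⟩]

theorem exists_int_rep [PartialOrder α] (lc rc : α → ℕ) (ρ : α → ℝ)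
    (hρ : ρ ∈ Qstar lc rc) (z : α → ℤ) (hz : ∀ x, ρ x = (z x : ℝ)) :
    ∃ l' r' : α → ℤ, (∀ x, l' x ≤ r' x) ∧ (∀ x y, x < y → r' x + 1 ≤ l' y) ∧
      (∀ x y, ¬ x < y → l' y ≤ r' x) ∧
      ∀ x, z x = r' x - l' x - ((rc x : ℤ) - (lc x : ℤ)) := by
  obtain ⟨l, r, hlr, hsep, hrefl, heq⟩ := hρ
  refine ⟨fun x => ⌈l x⌉, fun x => ⌈r x⌉, ?_, ?_, ?_, ?_⟩
  · exact fun x => Int.ceil_le_ceil (hlr x)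
  · intro x y hxy
    have h := hsep x y hxy
    have h2 : (⌈r x⌉ : ℤ) + 1 = ⌈r x + 1⌉ := (Int.ceil_add_one _).symm
    rw [h2]
    exact Int.ceil_le_ceil h
  · intro x y hxy
    have hle : l y ≤ r x := by
      by_contra hc
      exact hxy (hrefl x y (not_le.1 hc))
    exact Int.ceil_le_ceil hle
  · intro x
    have h := heq x
    rw [hz x] at h
    have hr : r x = l x + (((rc x : ℤ) - lc x + z x : ℤ) : ℝ) := by push_cast; linarith
    have hc : (⌈r x⌉ : ℤ) = ⌈l x⌉ + ((rc x : ℤ) - lc x + z x) := by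
      rw [hr, Int.ceil_add_intCast]
    dsimp only
    omega

theorem core {α : Type*} [Fintype α] [PartialOrder α] (m : ℕ) (lc rc : α → ℕ)
    (hclr : ∀ x, lc x ≤ rc x) (hcrep : ∀ x y : α, x < y ↔ rc x + 1 ≤ lc y)
    (hcm : ∀ x, rc x < m) (hcan : ∀ i < m, (∃ x, lc x = i) ∧ (∃ x, rc x = i))
    (l' r' : α → ℤ) (hlr : ∀ x, l' x ≤ r' x)
    (hsep : ∀ x y, x < y → r' x + 1 ≤ l' y)
    (hinc : ∀ x y, ¬ x < y → l' y ≤ r' x) :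
    (∀ x, 0 ≤ r' x - l' x - ((rc x : ℤ) - lc x)) ∧
    ((∀ x, r' x - l' x - ((rc x : ℤ) - lc x) ≤ 1) →
      ∃ 𝒯 : Finset (Set α),
        (∀ E ∈ 𝒯, FundExt m lc rc E ∧
          E ⊆ {x | r' x - l' x - ((rc x : ℤ) - lc x) = 1}) ∧
        (↑𝒯 : Set (Set α)).Pairwise Disjoint ∧
        ⋃₀ (↑𝒯 : Set (Set α)) = {x | r' x - l' x - ((rc x : ℤ) - lc x) = 1}) := by
  classical
  set n : α → ℤ := fun x => r' x - l' x - ((rc x : ℤ) - lc x) with hn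
  set p : ℕ → ℤ := fun i => if h : (Finset.univ.filter fun a : α => rc a + 1 = i).Nonempty
      then (Finset.univ.filter fun a : α => rc a + 1 = i).sup' h r' else 0 with hp
  set q : ℕ → ℤ := fun j => if h : (Finset.univ.filter fun b : α => lc b = j).Nonempty
      then (Finset.univ.filter fun b : α => lc b = j).inf' h l' else 0 with hq
  have hp_ge : ∀ (i : ℕ) (a : α), rc a + 1 = i → r' a ≤ p i := by
    intro i a ha
    have hne : (Finset.univ.filter fun a : α => rc a + 1 = i).Nonempty :=
      ⟨a, by simp [ha]⟩
    rw [hp]; dsimp only; rw [dif_pos hne]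
    exact Finset.le_sup' _ (by simp [ha])
  have hq_le : ∀ (j : ℕ) (b : α), lc b = j → q j ≤ l' b := by
    intro j b hb
    have hne : (Finset.univ.filter fun b : α => lc b = j).Nonempty :=
      ⟨b, by simp [hb]⟩
    rw [hq]; dsimp only; rw [dif_pos hne]
    exact Finset.inf'_le _ (by simp [hb])
  have hp_mem : ∀ i : ℕ, 1 ≤ i → i ≤ m → ∃ a : α, rc a + 1 = i ∧ p i = r' a := by
    intro i h1 h2
    obtain ⟨a, ha⟩ := (hcan (i-1) (by omega)).2
    have hne : (Finset.univ.filter fun a : α => rc a + 1 = i).Nonempty :=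
      ⟨a, by simp; omega⟩
    rw [hp]; dsimp only; rw [dif_pos hne]
    obtain ⟨b, hb, hbe⟩ := Finset.exists_mem_eq_sup' hne r'
    exact ⟨b, by simpa using hb, hbe⟩
  have hq_mem : ∀ j : ℕ, j < m → ∃ b : α, lc b = j ∧ q j = l' b := by
    intro j hj
    obtain ⟨b, hb⟩ := (hcan j hj).1
    have hne : (Finset.univ.filter fun b : α => lc b = j).Nonempty :=
      ⟨b, by simp [hb]⟩
    rw [hq]; dsimp only; rw [dif_pos hne]
    obtain ⟨c, hc, hce⟩ := Finset.exists_mem_eq_inf' hne l'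
    exact ⟨c, by simpa using hc, hce⟩
  set σ : ℕ → ℤ := fun j => q j - j with hσ
  set τ : ℕ → ℤ := fun j => p (j+1) - j with hτ
  have hστ : ∀ j, j < m → σ j ≤ τ j := by
    intro j hj
    obtain ⟨b, hb, hbe⟩ := hq_mem j hj
    obtain ⟨a, ha⟩ := (hcan j hj).2
    have hab : ¬ a < b := by rw [hcrep]; omega
    have h1 := hinc a b hab
    have h2 := hp_ge (j+1) a (by omega)
    simp only [hσ, hτ]; omega
  have hτσ : ∀ i, 1 ≤ i → i < m → τ (i-1) ≤ σ i := by
    intro i h1 h2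
    obtain ⟨a, ha, hae⟩ := hp_mem i h1 (by omega)
    obtain ⟨b, hb, hbe⟩ := hq_mem i h2
    have hab : a < b := by rw [hcrep]; omega
    have h3 := hsep a b hab
    simp only [hσ, hτ]
    have h4 : i - 1 + 1 = i := by omega
    rw [h4]
    omega
  have monoτ : ∀ j2, j2 < m → ∀ j1, j1 ≤ j2 → τ j1 ≤ τ j2 := by
    intro j2
    induction j2 with
    | zero => intro _ j1 h; have : j1 = 0 := by omega
              rw [this]
    | succ k ih =>
      intro hk j1 h1
      rcases Nat.lt_or_ge j1 (k+1) with h | h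
      · have s1 : τ k ≤ σ (k+1) := by
          have := hτσ (k+1) (by omega) hk
          simpa using this
        have s2 : σ (k+1) ≤ τ (k+1) := hστ (k+1) hk
        exact le_trans (ih (by omega) j1 (by omega)) (le_trans s1 s2)
      · have : j1 = k+1 := by omega
        rw [this]
  have τ_le_σ : ∀ j j', j < j' → j' < m → τ j ≤ σ j' := by
    intro j j' h h'
    exact le_trans (monoτ (j'-1) (by omega) j (by omega)) (hτσ j' (by omega) h')
  have monoσ : ∀ j j', j ≤ j' → j' < m → σ j ≤ σ j' := by
    intro j j' h h'
    rcases eq_or_lt_of_le h with rfl | hlt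
    · exact le_rfl
    · exact le_trans (hστ j (lt_trans hlt h')) (τ_le_σ j j' hlt h')
  have σ_le_τ' : ∀ j j', j ≤ j' → j' < m → σ j ≤ τ j' :=
    fun j j' h h' => le_trans (monoσ j j' h h') (hστ j' h')
  set A : α → ℤ := fun x => p (lc x + 1) - l' x with hA
  set B : α → ℤ := fun x => r' x - q (rc x) with hB
  have hA0 : ∀ x, 0 ≤ A x := by
    intro x
    obtain ⟨a, ha⟩ := (hcan (lc x) (lt_of_le_of_lt (hclr x) (hcm x))).2
    have hax : ¬ a < x := by rw [hcrep]; omega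
    have h1 := hinc a x hax
    have h2 := hp_ge (lc x + 1) a (by omega)
    simp only [hA]; omega
  have hB0 : ∀ x, 0 ≤ B x := by
    intro x
    obtain ⟨b, hb, hbe⟩ := hq_mem (rc x) (hcm x)
    have hxb : ¬ x < b := by rw [hcrep]; omega
    have h1 := hinc x b hxb
    simp only [hB]; omega
  have hAd : ∀ x, A x ≤ τ (lc x) - σ (lc x) := by
    intro x
    have := hq_le (lc x) x rfl
    simp only [hA, hτ, hσ]; omega
  have hBd : ∀ x, B x ≤ τ (rc x) - σ (rc x) := by
    intro x
    have := hp_ge (rc x + 1) x rfl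
    simp only [hB, hτ, hσ]; omega
  have hEq : ∀ x, n x = A x + B x + (σ (rc x) - τ (lc x)) := by
    intro x
    simp only [hn, hA, hB, hσ, hτ]
    ring
  have hPair : ∀ (j : ℕ) (x y : α), rc x = j → lc y = j →
      (τ j - σ j) ≤ A y + B x := by
    intro j x y hx hy
    subst hx
    have hxy : ¬ x < y := by rw [hcrep]; omega
    have h1 := hinc x y hxy
    simp only [hA, hB, hτ, hσ, hy]
    omega
  have hn0 : ∀ x, 0 ≤ n x := by
    intro x
    rcases eq_or_lt_of_le (hclr x) with heq | hlt
    · simp only [hn]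
      have := hlr x
      omega
    · have h1 := hA0 x
      have h2 := hB0 x
      have h3 : τ (lc x) ≤ σ (rc x) := τ_le_σ _ _ hlt (hcm x)
      have h4 := hEq x
      omega
  refine ⟨hn0, ?_⟩
  intro h01
  set E : ℕ → Set α := fun j => {x | n x = 1 ∧
    ((lc x < j ∧ j < rc x) ∨ (lc x = j ∧ 1 ≤ A x) ∨ (rc x = j ∧ 1 ≤ B x))} with hE
  set 𝒯 : Finset (Set α) :=
    (((Finset.Ico 1 m).filter fun i => 1 ≤ σ i - τ (i-1) ∧ (gapSet lc rc i).Nonempty).image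
      fun i => gapSet lc rc i) ∪
    (((Finset.range m).filter fun j => 1 ≤ τ j - σ j ∧ (E j).Nonempty).image E) with h𝒯
  have hmem𝒯 : ∀ X ∈ 𝒯,
      (∃ i, 1 ≤ i ∧ i < m ∧ 1 ≤ σ i - τ (i-1) ∧ (gapSet lc rc i).Nonempty ∧
        X = gapSet lc rc i) ∨
      (∃ j, j < m ∧ 1 ≤ τ j - σ j ∧ (E j).Nonempty ∧ X = E j) := by
    intro X hX
    rw [h𝒯, Finset.mem_union] at hX
    rcases hX with hX | hX
    · obtain ⟨i, hi, hXe⟩ := Finset.mem_image.1 hX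
      rw [Finset.mem_filter, Finset.mem_Ico] at hi
      exact Or.inl ⟨i, hi.1.1, hi.1.2, hi.2.1, hi.2.2, hXe.symm⟩
    · obtain ⟨j, hj, hXe⟩ := Finset.mem_image.1 hX
      rw [Finset.mem_filter, Finset.mem_range] at hj
      exact Or.inr ⟨j, hj.1, hj.2.1, hj.2.2, hXe.symm⟩
  have hGapU : ∀ i, 1 ≤ i → i < m → 1 ≤ σ i - τ (i-1) →
      ∀ x ∈ gapSet lc rc i, n x = 1 := by
    intro i h1 h2 hg x hx
    obtain ⟨hx1, hx2⟩ := hx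
    have e1 : τ (lc x) ≤ τ (i-1) := monoτ (i-1) (by omega) (lc x) (by omega)
    have e2 : σ i ≤ σ (rc x) := monoσ i (rc x) (by omega) (hcm x)
    have e3 := hEq x
    have e4 := hA0 x
    have e5 := hB0 x
    have e6 := h01 x
    simp only [hn] at e3 e6 ⊢
    omega
  -- membership in E j forces n = 1
  have hEU : ∀ j, ∀ x, x ∈ E j → n x = 1 := fun j x hx => hx.1
  -- coverage
  have hstep : ∀ jr, jr < m → ∀ jl, jl ≤ jr → 1 ≤ σ jr - τ jl →
      (∃ t, jl < t ∧ t ≤ jr ∧ 1 ≤ σ t - τ (t-1)) ∨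
      (∃ t, jl < t ∧ t < jr ∧ 1 ≤ τ t - σ t) := by
    intro jr
    induction jr with
    | zero =>
      intro hm jl hle hc
      have : jl = 0 := by omega
      subst this
      have := hστ 0 hm
      omega
    | succ k ih =>
      intro hm jl hle hc
      rcases Nat.lt_or_ge jl (k+1) with hjl | hjl
      · by_cases hg : 1 ≤ σ (k+1) - τ (k+1-1)
        · exact Or.inl ⟨k+1, by omega, le_rfl, hg⟩
        · rw [Nat.add_sub_cancel] at hg
          rcases Nat.lt_or_ge jl k with hjk | hjk
          · by_cases hd : 1 ≤ τ k - σ k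
            · exact Or.inr ⟨k, hjk, by omega, hd⟩
            · have hc' : 1 ≤ σ k - τ jl := by omega
              rcases ih (by omega) jl (by omega) hc' with ⟨t, ht⟩ | ⟨t, ht⟩
              · exact Or.inl ⟨t, ht.1, by omega, ht.2.2⟩
              · exact Or.inr ⟨t, ht.1, by omega, ht.2.2⟩
          · have : jl = k := by omega
            subst this
            omega
      · have : jl = k+1 := by omega
        subst this
        have := hστ (k+1) hm
        omega
  have hCover : ∀ x, n x = 1 → ∃ X ∈ 𝒯, x ∈ X := by
    intro x hx
    have hlcm : lc x < m := lt_of_le_of_lt (hclr x) (hcm x)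
    have hrcm : rc x < m := hcm x
    by_cases hA1 : 1 ≤ A x
    · refine ⟨E (lc x), ?_, ⟨hx, Or.inr (Or.inl ⟨rfl, hA1⟩)⟩⟩
      rw [h𝒯, Finset.mem_union]
      refine Or.inr (Finset.mem_image.2 ⟨lc x, ?_, rfl⟩)
      rw [Finset.mem_filter, Finset.mem_range]
      have := hAd x
      exact ⟨hlcm, by omega, ⟨x, hx, Or.inr (Or.inl ⟨rfl, hA1⟩)⟩⟩
    · by_cases hB1 : 1 ≤ B x
      · refine ⟨E (rc x), ?_, ⟨hx, Or.inr (Or.inr ⟨rfl, hB1⟩)⟩⟩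
        rw [h𝒯, Finset.mem_union]
        refine Or.inr (Finset.mem_image.2 ⟨rc x, ?_, rfl⟩)
        rw [Finset.mem_filter, Finset.mem_range]
        have := hBd x
        exact ⟨hcm x, by omega, ⟨x, hx, Or.inr (Or.inr ⟨rfl, hB1⟩)⟩⟩
      · have hw : 1 ≤ σ (rc x) - τ (lc x) := by
          have e1 := hEq x
          have e2 := hA0 x
          have e3 := hB0 x
          omega
        have hlt : lc x < rc x := by
          by_contra hcon
          have heqx : lc x = rc x := by have := hclr x; omega
          have hst := hστ (rc x) (hcm x)
          rw [heqx] at hw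
          omega
        rcases hstep (rc x) (hcm x) (lc x) (by omega) hw with ⟨t, ht1, ht2, ht3⟩ | ⟨t, ht1, ht2, ht3⟩
        · refine ⟨gapSet lc rc t, ?_, ⟨show lc x + 1 ≤ t by omega, show t ≤ rc x by omega⟩⟩
          rw [h𝒯, Finset.mem_union]
          refine Or.inl (Finset.mem_image.2 ⟨t, ?_, rfl⟩)
          rw [Finset.mem_filter, Finset.mem_Ico]
          exact ⟨⟨by omega, by omega⟩, ht3, ⟨x, show lc x + 1 ≤ t by omega, show t ≤ rc x by omega⟩⟩
        · refine ⟨E t, ?_, ⟨hx, Or.inl ⟨ht1, ht2⟩⟩⟩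
          rw [h𝒯, Finset.mem_union]
          refine Or.inr (Finset.mem_image.2 ⟨t, ?_, rfl⟩)
          rw [Finset.mem_filter, Finset.mem_range]
          exact ⟨by omega, ht3, ⟨x, hx, Or.inl ⟨ht1, ht2⟩⟩⟩
  -- disjointness helpers
  have hGG : ∀ i i', 1 ≤ i → i < m → 1 ≤ σ i - τ (i-1) → 1 ≤ i' → i' < m →
      1 ≤ σ i' - τ (i'-1) → i < i' → ∀ z, z ∈ gapSet lc rc i → z ∈ gapSet lc rc i' → False := by
    intro i i' hi1 him hgi hi'1 hi'm hgi' hii z hz hz'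
    obtain ⟨a1, a2⟩ := hz
    obtain ⟨b1, b2⟩ := hz'
    have e1 : τ (lc z) ≤ τ (i-1) := monoτ (i-1) (by omega) (lc z) (by omega)
    have e2 : σ i ≤ τ (i'-1) := σ_le_τ' i (i'-1) (by omega) (by omega)
    have e3 : σ i' ≤ σ (rc z) := monoσ i' (rc z) (by omega) (hcm z)
    have e4 := hEq z
    have e5 := hA0 z
    have e6 := hB0 z
    have e7 := h01 z
    simp only [hn] at e4 e7
    omega
  have hGE : ∀ i j, 1 ≤ i → i < m → 1 ≤ σ i - τ (i-1) → j < m → 1 ≤ τ j - σ j →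
      ∀ z, z ∈ gapSet lc rc i → z ∈ E j → False := by
    intro i j hi1 him hgi hjm hdj z hz hzE
    obtain ⟨a1, a2⟩ := hz
    have e4 := hEq z
    have e5 := hA0 z
    have e6 := hB0 z
    have e7 := h01 z
    have hrm := hcm z
    simp only [hn] at e4 e7
    rcases hzE.2 with ⟨c1, c2⟩ | ⟨c1, c2⟩ | ⟨c1, c2⟩
    · rcases le_or_gt i j with h | h
      · have e1 : τ (lc z) ≤ τ (i-1) := monoτ (i-1) (by omega) (lc z) (by omega)
        have e2 : σ i ≤ σ j := monoσ i j h (by omega)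
        have e3 : τ j ≤ σ (rc z) := τ_le_σ j (rc z) c2 (hcm z)
        omega
      · have e1 : τ (lc z) ≤ σ j := τ_le_σ (lc z) j c1 (by omega)
        have e2 : τ j ≤ τ (i-1) := monoτ (i-1) (by omega) j (by omega)
        have e3 : σ i ≤ σ (rc z) := monoσ i (rc z) a2 (hcm z)
        omega
    · have e1 : τ (lc z) ≤ τ (i-1) := monoτ (i-1) (by omega) (lc z) (by omega)
      have e2 : σ i ≤ σ (rc z) := monoσ i (rc z) a2 (hcm z)
      omega
    · have e1 : τ (lc z) ≤ τ (i-1) := monoτ (i-1) (by omega) (lc z) (by omega)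
      have e2 : σ i ≤ σ (rc z) := monoσ i (rc z) a2 (hcm z)
      omega
  have hEE : ∀ j j', j < j' → j < m → 1 ≤ τ j - σ j → j' < m → 1 ≤ τ j' - σ j' →
      ∀ z, z ∈ E j → z ∈ E j' → False := by
    intro j j' hjj hjm hdj hj'm hdj' z hz hz'
    have e4 := hEq z
    have e5 := hA0 z
    have e6 := hB0 z
    have e7 := h01 z
    have hrm := hcm z
    have hcl := hclr z
    simp only [hn] at e4 e7
    rcases hz.2 with ⟨c1, c2⟩ | ⟨c1, c2⟩ | ⟨c1, c2⟩ <;>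
      rcases hz'.2 with ⟨d1, d2⟩ | ⟨d1, d2⟩ | ⟨d1, d2⟩
    · have e1 : τ (lc z) ≤ σ j := τ_le_σ (lc z) j c1 (by omega)
      have e2 : τ j ≤ σ j' := τ_le_σ j j' hjj (by omega)
      have e3 : τ j' ≤ σ (rc z) := τ_le_σ j' (rc z) d2 (hcm z)
      omega
    · omega
    · have e1 : τ (lc z) ≤ σ j := τ_le_σ (lc z) j c1 (by omega)
      have e2 : τ j ≤ σ (rc z) := τ_le_σ j (rc z) (by omega) (hcm z)
      omega
    · subst c1
      have e1 : τ (lc z) ≤ σ j' := τ_le_σ (lc z) j' hjj (by omega)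
      have e2 : τ j' ≤ σ (rc z) := τ_le_σ j' (rc z) d2 (hcm z)
      omega
    · omega
    · subst c1
      subst d1
      have e1 : τ (lc z) ≤ σ (rc z) := τ_le_σ (lc z) (rc z) (by omega) (hcm z)
      omega
    · omega
    · omega
    · omega
  have hDisj : (↑𝒯 : Set (Set α)).Pairwise Disjoint := by
    intro X hX Y hY hXY
    rw [Set.disjoint_left]
    intro z hzX hzY
    rcases hmem𝒯 X hX with ⟨i, hi1, him, hgi, -, rfl⟩ | ⟨j, hjm, hdj, -, rfl⟩ <;>
      rcases hmem𝒯 Y hY with ⟨i', hi'1, hi'm, hgi', -, rfl⟩ | ⟨j', hj'm, hdj', -, rfl⟩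
    · rcases lt_trichotomy i i' with h | h | h
      · exact hGG i i' hi1 him hgi hi'1 hi'm hgi' h z hzX hzY
      · exact hXY (by rw [h])
      · exact hGG i' i hi'1 hi'm hgi' hi1 him hgi h z hzY hzX
    · exact hGE i j' hi1 him hgi hj'm hdj' z hzX hzY
    · exact hGE i' j hi'1 hi'm hgi' hjm hdj z hzY hzX
    · rcases lt_trichotomy j j' with h | h | h
      · exact hEE j j' h hjm hdj hj'm hdj' z hzX hzY
      · exact hXY (by rw [h])
      · exact hEE j' j h hj'm hdj' hjm hdj z hzY hzX
  refine ⟨𝒯, ?_, hDisj, ?_⟩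
  · intro X hX
    rcases hmem𝒯 X hX with ⟨i, hi1, him, hgi, hne, rfl⟩ | ⟨j, hjm, hdj, hne, rfl⟩
    · refine ⟨⟨hne, i, by omega, ∅, Or.inl (Set.empty_subset _), by
        rw [Set.union_empty]⟩, ?_⟩
      intro x hx
      exact hGapU i hi1 him hgi x hx
    · refine ⟨⟨hne, ?_⟩, fun x hx => hx.1⟩
      by_cases hCB : ∀ x : α, rc x = j → 1 ≤ B x
      · refine ⟨j, by omega, E j ∩ {y | lc y = j}, Or.inr (fun y hy => hy.2), ?_⟩
        apply Set.Subset.antisymm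
        · rintro z ⟨hz1, ⟨c1, c2⟩ | ⟨c1, c2⟩ | ⟨c1, c2⟩⟩
          · exact Set.mem_union_left _ ⟨by omega, by omega⟩
          · exact Set.mem_union_right _ ⟨⟨hz1, Or.inr (Or.inl ⟨c1, c2⟩)⟩, c1⟩
          · rcases Nat.lt_or_ge (lc z) j with h | h
            · exact Set.mem_union_left _ ⟨by omega, by omega⟩
            · have hlz : lc z = j := by have := hclr z; omega
              exact Set.mem_union_right _ ⟨⟨hz1, Or.inr (Or.inr ⟨c1, c2⟩)⟩, hlz⟩
        · rintro z (⟨g1, g2⟩ | ⟨hz, -⟩)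
          · -- z ∈ gapSet j
            have e4 := hEq z
            have e5 := hA0 z
            have e6 := hB0 z
            have e7 := h01 z
            have e8 : n z = r' z - l' z - ((rc z : ℤ) - (lc z : ℤ)) := rfl
            rcases eq_or_lt_of_le g2 with hje | hjl
            · -- rc z = j
              have hBz := hCB z hje.symm
              have e1 : τ (lc z) ≤ σ (rc z) := τ_le_σ (lc z) (rc z) (by omega) (hcm z)
              exact ⟨by omega, Or.inr (Or.inr ⟨hje.symm, hBz⟩)⟩
            · -- interior
              have e1 : τ (lc z) ≤ σ j := τ_le_σ (lc z) j (by omega) (by omega)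
              have e2 : τ j ≤ σ (rc z) := τ_le_σ j (rc z) hjl (hcm z)
              exact ⟨by omega, Or.inl ⟨by omega, hjl⟩⟩
          · exact hz
      · push_neg at hCB
        obtain ⟨x0, hx0, hBx0⟩ := hCB
        have hBx0' : B x0 ≤ 0 := by omega
        have hCA : ∀ y, lc y = j → 1 ≤ A y := by
          intro y hy
          have := hPair j x0 y hx0 hy
          have := hB0 x0
          omega
        refine ⟨j+1, by omega, E j ∩ leftBorder rc (j+1), Or.inl (fun y hy => hy.2), ?_⟩
        apply Set.Subset.antisymm
        · rintro z ⟨hz1, ⟨c1, c2⟩ | ⟨c1, c2⟩ | ⟨c1, c2⟩⟩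
          · exact Set.mem_union_left _ ⟨by omega, by omega⟩
          · rcases Nat.lt_or_ge j (rc z) with h | h
            · exact Set.mem_union_left _ ⟨by omega, by omega⟩
            · have hrz : rc z + 1 = j + 1 := by have := hclr z; omega
              exact Set.mem_union_right _ ⟨⟨hz1, Or.inr (Or.inl ⟨c1, c2⟩)⟩, hrz⟩
          · exact Set.mem_union_right _ ⟨⟨hz1, Or.inr (Or.inr ⟨c1, c2⟩)⟩, by
              show rc z + 1 = j + 1
              omega⟩
        · rintro z (⟨g1, g2⟩ | ⟨hz, -⟩)
          · -- z ∈ gapSet (j+1) : lc z ≤ j < rc z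
            have e4 := hEq z
            have e5 := hA0 z
            have e6 := hB0 z
            have e7 := h01 z
            have e8 : n z = r' z - l' z - ((rc z : ℤ) - (lc z : ℤ)) := rfl
            rcases Nat.lt_or_ge (lc z) j with h | h
            · -- interior
              have e1 : τ (lc z) ≤ σ j := τ_le_σ (lc z) j h (by omega)
              have e2 : τ j ≤ σ (rc z) := τ_le_σ j (rc z) (by omega) (hcm z)
              exact ⟨by omega, Or.inl ⟨h, by omega⟩⟩
            · have hlz : lc z = j := by omega
              have hAz := hCA z hlz
              have e1 : τ (lc z) ≤ σ (rc z) := τ_le_σ (lc z) (rc z) (by omega) (hcm z)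
              exact ⟨by omega, Or.inr (Or.inl ⟨hlz, hAz⟩)⟩
          · exact hz
  · apply Set.Subset.antisymm
    · rintro x ⟨X, hX, hxX⟩
      rcases hmem𝒯 X hX with ⟨i, hi1, him, hgi, -, rfl⟩ | ⟨j, hjm, hdj, -, rfl⟩
      · exact hGapU i hi1 him hgi x hxX
      · exact hxX.1
    · intro x hx
      obtain ⟨X, hX, hxX⟩ := hCover x hx
      exact ⟨X, hX, hxX⟩


theorem decomp [Fintype α] [PartialOrder α] (m : ℕ) (lc rc : α → ℕ)
    (hclr : ∀ x, lc x ≤ rc x) (hcrep : ∀ x y : α, x < y ↔ rc x + 1 ≤ lc y)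
    (hcm : ∀ x, rc x < m) (hcan : ∀ i < m, (∃ x, lc x = i) ∧ (∃ x, rc x = i))
    (U : Set α) (hU : chiVec U ∈ Qstar lc rc) :
    ∃ 𝒯 : Finset (Set α), (∀ E ∈ 𝒯, FundExt m lc rc E ∧ E ⊆ U) ∧
      (↑𝒯 : Set (Set α)).Pairwise Disjoint ∧ ⋃₀ (↑𝒯 : Set (Set α)) = U := by
  classical
  set z : α → ℤ := fun x => if x ∈ U then 1 else 0 with hzdef
  have hz : ∀ x, chiVec U x = (z x : ℝ) := by
    intro x
    rw [chiVec_apply]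
    simp only [hzdef]
    split_ifs <;> norm_num
  obtain ⟨l', r', h1, h2, h3, h4⟩ := exists_int_rep lc rc _ hU z hz
  obtain ⟨hn0, hdec⟩ := core m lc rc hclr hcrep hcm hcan l' r' h1 h2 h3
  have h01 : ∀ x, r' x - l' x - ((rc x : ℤ) - lc x) ≤ 1 := by
    intro x
    rw [← h4 x]
    simp only [hzdef]
    split_ifs <;> norm_num
  obtain ⟨𝒯, hmem, hdisj, huni⟩ := hdec h01
  have hUeq : {x | r' x - l' x - ((rc x : ℤ) - lc x) = 1} = U := by
    ext x
    simp only [Set.mem_setOf_eq, ← h4 x, hzdef]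
    split_ifs with h <;> simp [h]
  rw [hUeq] at huni
  refine ⟨𝒯, fun E hE => ⟨(hmem E hE).1, ?_⟩, hdisj, huni⟩
  have := (hmem E hE).2
  rw [hUeq] at this
  exact this

theorem mem_nonneg [Fintype α] [PartialOrder α] (m : ℕ) (lc rc : α → ℕ)
    (hclr : ∀ x, lc x ≤ rc x) (hcrep : ∀ x y : α, x < y ↔ rc x + 1 ≤ lc y)
    (hcm : ∀ x, rc x < m) (hcan : ∀ i < m, (∃ x, lc x = i) ∧ (∃ x, rc x = i))
    (ρ : α → ℝ) (hρ : ρ ∈ Qstar lc rc) (hint : ∀ x, ∃ k : ℤ, ρ x = (k:ℝ)) :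
    ∀ x, 0 ≤ ρ x := by
  choose z hz using hint
  obtain ⟨l', r', h1, h2, h3, h4⟩ := exists_int_rep lc rc ρ hρ z hz
  obtain ⟨hn0, -⟩ := core m lc rc hclr hcrep hcm hcan l' r' h1 h2 h3
  intro x
  rw [hz x]
  have h5 := hn0 x
  rw [← h4 x] at h5
  exact_mod_cast h5

theorem combo_iff_span (H : Set (α → ℝ)) (v : α → ℝ) :
    (∃ (T : Finset (α → ℝ)) (c : (α → ℝ) → ℕ), ↑T ⊆ H ∧ v = ∑ h ∈ T, (c h : ℝ) • h) ↔
      v ∈ Submodule.span ℕ H := by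
  constructor
  · rintro ⟨T, c, hTH, rfl⟩
    apply Submodule.sum_mem
    intro h hh
    rw [Nat.cast_smul_eq_nsmul]
    exact Submodule.smul_mem _ _ (Submodule.subset_span (hTH hh))
  · intro hv
    obtain ⟨c, hsupp, hsum⟩ := Submodule.mem_span_set.1 hv
    refine ⟨c.support, fun h => c h, hsupp, ?_⟩
    rw [← hsum, Finsupp.sum]
    apply Finset.sum_congr rfl
    intro h _
    rw [Nat.cast_smul_eq_nsmul]

theorem chi_sUnion (𝒯 : Finset (Set α))
    (hdisj : (↑𝒯 : Set (Set α)).Pairwise Disjoint) :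
    chiVec (⋃₀ (↑𝒯 : Set (Set α))) = ∑ T ∈ 𝒯, chiVec T := by
  classical
  funext x
  rw [Finset.sum_apply]
  by_cases hx : ∃ T ∈ 𝒯, x ∈ T
  · obtain ⟨T0, hT0, hxT0⟩ := hx
    rw [chiVec_apply, if_pos (Set.mem_sUnion.2 ⟨T0, Finset.mem_coe.2 hT0, hxT0⟩)]
    rw [Finset.sum_eq_single_of_mem T0 hT0]
    · rw [chiVec_apply, if_pos hxT0]
    · intro T hT hne
      rw [chiVec_apply, if_neg]
      intro hxT
      exact Set.disjoint_left.1
        (hdisj (Finset.mem_coe.2 hT) (Finset.mem_coe.2 hT0) hne) hxT hxT0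
  · push_neg at hx
    rw [chiVec_apply, if_neg (fun hc => by
      obtain ⟨T, hT, hxT⟩ := Set.mem_sUnion.1 hc
      exact hx T (Finset.mem_coe.1 hT) hxT)]
    symm
    apply Finset.sum_eq_zero
    intro T hT
    rw [chiVec_apply, if_neg (hx T hT)]

end Aux

/-- A fundamental extender is a Hilbert set iff it is not a disjoint union of proper
fundamental extenders: a disjoint union of two or more fundamental extenders is never in
the minimal Hilbert basis, and an indecomposable fundamental extender always is. -/
theorem stmt_13 {α : Type*} [Fintype α] [PartialOrder α] (m : ℕ) (lc rc : α → ℕ)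
    (hclr : ∀ x, lc x ≤ rc x) (hcrep : ∀ x y : α, x < y ↔ rc x + 1 ≤ lc y)
    (hcm : ∀ x, rc x < m) (hcan : ∀ i < m, (∃ x, lc x = i) ∧ (∃ x, rc x = i))
    (H : Set (α → ℝ)) (hH : IsMinimalHilbertBasis (Qstar lc rc) H) :
    (∀ S : Set α,
      (∃ 𝒯 : Finset (Set α), 2 ≤ 𝒯.card ∧ (∀ T ∈ 𝒯, FundExt m lc rc T) ∧
        (↑𝒯 : Set (Set α)).Pairwise Disjoint ∧ S = ⋃₀ ↑𝒯) →
      chiVec S ∉ H) ∧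
    (∀ S : Set α, FundExt m lc rc S →
      ¬ (∃ 𝒯 : Finset (Set α), (∀ T ∈ 𝒯, FundExt m lc rc T ∧ T ⊂ S) ∧
          (↑𝒯 : Set (Set α)).Pairwise Disjoint ∧ S = ⋃₀ ↑𝒯) →
      chiVec S ∈ H) := by
  classical
  obtain ⟨⟨hHfin, hHsub, hHint, hHgen⟩, hHmin⟩ := hH
  have hnn : ∀ h ∈ H, ∀ x, 0 ≤ h x := fun h hh =>
    mem_nonneg m lc rc hclr hcrep hcm hcan h (hHsub hh) (hHint h hh)
  constructor
  · rintro S ⟨𝒯, hcard, hFE, hdisj, rfl⟩ hSH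
    set S : Set α := ⋃₀ (↑𝒯 : Set (Set α)) with hSdef
    set H' : Set (α → ℝ) := H \ {chiVec S} with hH'
    have hH'H : H' ⊆ H := Set.diff_subset
    have hchiT : ∀ T ∈ 𝒯, chiVec T ∈ Submodule.span ℕ H' := by
      intro T hT
      have hQ : chiVec T ∈ Qstar lc rc := fundext_chi_mem m lc rc hclr hcrep T (hFE T hT)
      obtain ⟨W, c, hWH, hWsum⟩ := hHgen _ hQ (chiVec_int T)
      obtain ⟨T', hT', hTT'⟩ := Finset.exists_mem_ne (show 1 < 𝒯.card by omega) T
      obtain ⟨x0, hx0⟩ := (hFE T' hT').1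
      have hx0T : x0 ∉ T := fun hc =>
        Set.disjoint_left.1
          (hdisj (Finset.mem_coe.2 hT') (Finset.mem_coe.2 hT) hTT') hx0 hc
      have hx0S : x0 ∈ S := ⟨T', Finset.mem_coe.2 hT', hx0⟩
      have heval : ∑ h ∈ W, (c h : ℝ) * h x0 = 0 := by
        have hev := congrFun hWsum x0
        rw [chiVec_apply, if_neg hx0T, Finset.sum_apply] at hev
        have hconv : ∑ h ∈ W, (c h : ℝ) * h x0 = ∑ h ∈ W, ((c h : ℝ) • h) x0 :=
          Finset.sum_congr rfl (fun h _ => by simp [smul_eq_mul])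
        rw [hconv]
        exact hev.symm
      have hterms : ∀ h ∈ W, 0 ≤ (c h : ℝ) * h x0 := fun h hh =>
        mul_nonneg (Nat.cast_nonneg _) (hnn h (hWH hh) x0)
      have hzero := (Finset.sum_eq_zero_iff_of_nonneg hterms).1 heval
      rw [hWsum]
      apply Submodule.sum_mem
      intro h hh
      by_cases hhS : h = chiVec S
      · have hx0v : h x0 = 1 := by rw [hhS, chiVec_apply, if_pos hx0S]
        have := hzero h hh
        rw [hx0v, mul_one] at this
        have hc0 : c h = 0 := by exact_mod_cast this
        rw [hc0]
        norm_num
      · rw [Nat.cast_smul_eq_nsmul]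
        exact Submodule.smul_mem _ _ (Submodule.subset_span ⟨hWH hh, hhS⟩)
    have hspanS : chiVec S ∈ Submodule.span ℕ H' := by
      rw [hSdef, chi_sUnion 𝒯 hdisj]
      exact Submodule.sum_mem _ (fun T hT => hchiT T hT)
    have hH'basis : IsHilbertBasis (Qstar lc rc) H' := by
      refine ⟨hHfin.subset hH'H, fun h hh => hHsub (hH'H hh),
        fun h hh => hHint h (hH'H hh), ?_⟩
      intro v hv hvint
      obtain ⟨W, c, hWH, hWsum⟩ := hHgen v hv hvint
      have hvspan : v ∈ Submodule.span ℕ H := (combo_iff_span H v).1 ⟨W, c, hWH, hWsum⟩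
      have hins : H = insert (chiVec S) H' := by
        rw [hH', Set.insert_diff_singleton, Set.insert_eq_self.2 hSH]
      rw [hins, Submodule.span_insert_eq_span hspanS] at hvspan
      exact (combo_iff_span H' v).2 hvspan
    have heq := hHmin H' hH'H hH'basis
    rw [← heq] at hSH
    exact hSH.2 rfl
  · intro S hSF hnot
    by_contra hSH
    have hQ : chiVec S ∈ Qstar lc rc := fundext_chi_mem m lc rc hclr hcrep S hSF
    obtain ⟨W, c, hWH, hWsum⟩ := hHgen _ hQ (chiVec_int S)
    set W' := W.filter (fun h => c h ≠ 0) with hW'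
    have hW'mem : ∀ h ∈ W', h ∈ W ∧ c h ≠ 0 := fun h hh => Finset.mem_filter.1 hh
    have hS1 : ∀ x, chiVec S x ≤ 1 := by
      intro x
      rw [chiVec_apply]
      split_ifs <;> norm_num
    have hsum_eval : ∀ x, chiVec S x = ∑ h ∈ W, (c h : ℝ) * h x := by
      intro x
      have hev := congrFun hWsum x
      rw [hev, Finset.sum_apply]
      apply Finset.sum_congr rfl
      intro h _
      simp [smul_eq_mul]
    have hterms : ∀ x, ∀ h ∈ W, 0 ≤ (c h : ℝ) * h x := fun x h hh =>
      mul_nonneg (Nat.cast_nonneg _) (hnn h (hWH hh) x)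
    have hchiS_le : ∀ x, ∀ h ∈ W', (c h : ℝ) * h x ≤ chiVec S x := by
      intro x h hh
      rw [hsum_eval x]
      exact Finset.single_le_sum (hterms x) (hW'mem h hh).1
    have hc1 : ∀ h ∈ W', (1:ℝ) ≤ (c h : ℝ) := by
      intro h hh
      exact_mod_cast Nat.one_le_iff_ne_zero.2 (hW'mem h hh).2
    have hh01 : ∀ h ∈ W', ∀ x, h x = 0 ∨ h x = 1 := by
      intro h hh x
      obtain ⟨k, hk⟩ := hHint h (hWH (hW'mem h hh).1) x
      have h0 : 0 ≤ h x := hnn h (hWH (hW'mem h hh).1) x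
      have hle := hchiS_le x h hh
      have hs1 := hS1 x
      have hc1' := hc1 h hh
      have hle1 : h x ≤ 1 := by nlinarith
      rw [hk] at h0 hle1 ⊢
      have hk0 : (0:ℤ) ≤ k := by exact_mod_cast h0
      have hk1 : k ≤ 1 := by exact_mod_cast hle1
      interval_cases k
      · exact Or.inl (by norm_num)
      · exact Or.inr (by norm_num)
    have hUeq : ∀ h ∈ W', chiVec {x | h x ≠ 0} = h := by
      intro h hh
      funext x
      rcases hh01 h hh x with h0 | h1
      · rw [chiVec_apply, if_neg (by simp [h0]), h0]
      · rw [chiVec_apply, if_pos (by simp [h1]), h1]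
    have hUsubS : ∀ h ∈ W', {x | h x ≠ 0} ⊆ S := by
      intro h hh x hx
      rcases hh01 h hh x with h0 | h1
      · exact absurd h0 hx
      · have hle := hchiS_le x h hh
        rw [h1, mul_one] at hle
        by_contra hxS
        rw [chiVec_apply, if_neg hxS] at hle
        have := hc1 h hh
        linarith
    have hUneS : ∀ h ∈ W', {x | h x ≠ 0} ≠ S := by
      intro h hh hc
      apply hSH
      have h2 : chiVec S = h := by rw [← hc, hUeq h hh]
      rw [h2]
      exact hWH (Finset.mem_coe.2 (hW'mem h hh).1)
    have hdec : ∀ h ∈ W', ∃ 𝒯h : Finset (Set α),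
        (∀ E ∈ 𝒯h, FundExt m lc rc E ∧ E ⊆ {x | h x ≠ 0}) ∧
        (↑𝒯h : Set (Set α)).Pairwise Disjoint ∧
        ⋃₀ (↑𝒯h : Set (Set α)) = {x | h x ≠ 0} := by
      intro h hh
      apply decomp m lc rc hclr hcrep hcm hcan
      rw [hUeq h hh]
      exact hHsub (hWH (hW'mem h hh).1)
    choose F hF1 hF2 hF3 using hdec
    set 𝒯 : Finset (Set α) :=
      W'.attach.biUnion (fun h => F h.1 h.2) with h𝒯
    have hmem𝒯 : ∀ T, T ∈ 𝒯 ↔ ∃ h, ∃ hh : h ∈ W', T ∈ F h hh := by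
      intro T
      rw [h𝒯, Finset.mem_biUnion]
      constructor
      · rintro ⟨h, -, hTF⟩
        exact ⟨h.1, h.2, hTF⟩
      · rintro ⟨h, hh, hTF⟩
        exact ⟨⟨h, hh⟩, Finset.mem_attach _ _, hTF⟩
    have hsupdisj : ∀ h1, ∀ hh1 : h1 ∈ W', ∀ h2, ∀ hh2 : h2 ∈ W', h1 ≠ h2 →
        ∀ x, h1 x ≠ 0 → h2 x ≠ 0 → False := by
      intro h1 hh1 h2 hh2 hne x hx1 hx2
      have e1 : h1 x = 1 := (hh01 h1 hh1 x).resolve_left hx1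
      have e2 : h2 x = 1 := (hh01 h2 hh2 x).resolve_left hx2
      have hsub : ({h1, h2} : Finset (α → ℝ)) ⊆ W := by
        intro g hg
        rcases Finset.mem_insert.1 hg with h | hg
        · rw [h]; exact (hW'mem _ hh1).1
        · rw [Finset.mem_singleton.1 hg]; exact (hW'mem _ hh2).1
      have hpair : (c h1 : ℝ) * h1 x + (c h2 : ℝ) * h2 x ≤ chiVec S x := by
        rw [hsum_eval x]
        have := Finset.sum_le_sum_of_subset_of_nonneg hsub
          (fun g hg _ => hterms x g hg)
        rw [Finset.sum_pair hne] at this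
        exact this
      rw [e1, e2, mul_one, mul_one] at hpair
      have hb1 := hc1 h1 hh1
      have hb2 := hc1 h2 hh2
      have := hS1 x
      linarith
    apply hnot
    refine ⟨𝒯, ?_, ?_, ?_⟩
    · intro T hT
      obtain ⟨h, hh, hTF⟩ := (hmem𝒯 T).1 hT
      refine ⟨(hF1 h hh T hTF).1, ?_⟩
      have hUS : {x | h x ≠ 0} ⊂ S :=
        HasSubset.Subset.ssubset_of_ne (hUsubS h hh) (hUneS h hh)
      exact ssubset_of_subset_of_ssubset (hF1 h hh T hTF).2 hUS
    · intro X hX Y hY hXY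
      obtain ⟨h1, hh1, hXF⟩ := (hmem𝒯 X).1 (Finset.mem_coe.1 hX)
      obtain ⟨h2, hh2, hYF⟩ := (hmem𝒯 Y).1 (Finset.mem_coe.1 hY)
      by_cases he : h1 = h2
      · subst he
        exact hF2 h1 hh1 (Finset.mem_coe.2 hXF) (Finset.mem_coe.2 hYF) hXY
      · rw [Set.disjoint_left]
        intro z hzX hzY
        exact hsupdisj h1 hh1 h2 hh2 he z
          ((hF1 h1 hh1 X hXF).2 hzX) ((hF1 h2 hh2 Y hYF).2 hzY)
    · apply Set.Subset.antisymm
      · intro x hxS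
        have h1 : chiVec S x = 1 := by rw [chiVec_apply, if_pos hxS]
        have hsne : ∑ h ∈ W, (c h : ℝ) * h x ≠ 0 := by
          rw [← hsum_eval x, h1]
          norm_num
        obtain ⟨h, hh, hne0⟩ := Finset.exists_ne_zero_of_sum_ne_zero hsne
        obtain ⟨hcne, hxne⟩ := mul_ne_zero_iff.1 hne0
        have hhW' : h ∈ W' := Finset.mem_filter.2 ⟨hh, fun hc => hcne (by rw [hc]; norm_num)⟩
        have hxU : x ∈ ⋃₀ (↑(F h hhW') : Set (Set α)) := by
          rw [hF3 h hhW']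
          exact hxne
        obtain ⟨T, hT, hxT⟩ := hxU
        exact ⟨T, Finset.mem_coe.2 ((hmem𝒯 T).2 ⟨h, hhW', Finset.mem_coe.1 hT⟩), hxT⟩
      · rintro x ⟨T, hT, hxT⟩
        obtain ⟨h, hh, hTF⟩ := (hmem𝒯 T).1 (Finset.mem_coe.1 hT)
        exact hUsubS h hh ((hF1 h hh T hTF).2 hxT)
end

section
/- The characteristic vectors of the fundamental extenders of an interval order P form an integral Hilbert basis of the pointed cone Q*_P: every integral vector of Q*_P (equivalently, every difference v − ρ* where v is the length vector of a natural representation and ρ* is the canonical length vector) is a nonnegative integral combination of characteristic vectors of fundamental extenders. -/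
section HilbertAux

open Classical

set_option linter.unusedSectionVars false
set_option linter.unusedVariables false
set_option maxHeartbeats 1000000

variable {α : Type*} [Fintype α] [PartialOrder α]
variable {m : ℕ} {lc rc : α → ℕ}

/-- monotonicity of right endpoints. -/
lemma rmono (hcrep : ∀ x y : α, x < y ↔ rc x + 1 ≤ lc y) (hcm : ∀ x, rc x < m)
    (hcan : ∀ i < m, (∃ x, lc x = i) ∧ (∃ x, rc x = i))
    {l r : α → ℤ} (h2 : ∀ x y : α, x < y → r x + 1 ≤ l y)
    (h3 : ∀ x y : α, r x < l y → x < y)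
    {a b : α} (hab : rc a < rc b) : r a < r b := by
  obtain ⟨z, hz⟩ := (hcan (rc a + 1) (by have := hcm b; omega)).1
  have haz : a < z := (hcrep a z).2 (by omega)
  have hbz : ¬ b < z := by
    intro h; have := (hcrep b z).1 h; omega
  have h1 : r a + 1 ≤ l z := h2 a z haz
  have h2' : l z ≤ r b := by
    by_contra h; push_neg at h; exact hbz (h3 b z h)
  omega


/-- canonical lengths are minimal. -/
lemma excess_nonneg (hclr : ∀ x, lc x ≤ rc x)
    (hcrep : ∀ x y : α, x < y ↔ rc x + 1 ≤ lc y) (hcm : ∀ x, rc x < m)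
    (hcan : ∀ i < m, (∃ x, lc x = i) ∧ (∃ x, rc x = i))
    {l r : α → ℤ} (h1 : ∀ x, l x ≤ r x) (h2 : ∀ x y : α, x < y → r x + 1 ≤ l y)
    (h3 : ∀ x y : α, r x < l y → x < y)
    (x : α) : ((rc x : ℤ) - (lc x : ℤ)) ≤ r x - l x := by
  have key : ∀ d : ℕ, lc x + d ≤ rc x → ∃ y, rc y = lc x + d ∧ l x + d ≤ r y := by
    intro d
    induction d with
    | zero =>
      intro _
      obtain ⟨y, hy⟩ := (hcan (lc x) (by have := hcm x; have := hclr x; omega)).2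
      refine ⟨y, by omega, ?_⟩
      have : ¬ y < x := by
        intro h; have := (hcrep y x).1 h; omega
      have : ¬ r y < l x := fun h => this (h3 y x h)
      omega
    | succ d ih =>
      intro hd
      obtain ⟨y, hy, hry⟩ := ih (by omega)
      obtain ⟨a, ha⟩ := (hcan (lc x + d + 1) (by have := hcm x; omega)).1
      obtain ⟨y', hy'⟩ := (hcan (lc x + d + 1) (by have := hcm x; omega)).2
      have hya : y < a := (hcrep y a).2 (by omega)
      have h2' : r y + 1 ≤ l a := h2 y a hya
      have : ¬ y' < a := by intro h; have := (hcrep y' a).1 h; omega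
      have h3' : l a ≤ r y' := by
        by_contra h; push_neg at h; exact this (h3 y' a h)
      exact ⟨y', by omega, by push_cast; omega⟩
  rcases Nat.eq_or_lt_of_le (hclr x) with heq | hlt
  · have := h1 x; omega
  · obtain ⟨y, hy, hry⟩ := key (rc x - lc x - 1) (by omega)
    obtain ⟨a, ha⟩ := (hcan (rc x) (hcm x)).1
    have hya : y < a := (hcrep y a).2 (by omega)
    have h2' : r y + 1 ≤ l a := h2 y a hya
    have hxa : ¬ x < a := by intro h; have := (hcrep x a).1 h; omega
    have h3' : l a ≤ r x := by
      by_contra h; push_neg at h; exact hxa (h3 x a h)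
    have : (↑(rc x - lc x - 1) : ℤ) = (rc x : ℤ) - lc x - 1 := by omega
    omega


lemma exists_good_t (hclr : ∀ x, lc x ≤ rc x)
    (hcrep : ∀ x y : α, x < y ↔ rc x + 1 ≤ lc y) (hcm : ∀ x, rc x < m)
    (hcan : ∀ i < m, (∃ x, lc x = i) ∧ (∃ x, rc x = i))
    {l r : α → ℤ} (h1 : ∀ x, l x ≤ r x) (h2 : ∀ x y : α, x < y → r x + 1 ≤ l y)
    (h3 : ∀ x y : α, r x < l y → x < y)
    {x0 : α} (hx0 : ((rc x0 : ℤ) - (lc x0 : ℤ)) + 1 ≤ r x0 - l x0) :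
    ∃ t : ℤ, l x0 ≤ t ∧ t + 1 ≤ r x0 ∧
      ∀ x y : α, x < y → ¬(r x = t ∧ l y = t + 1) := by
  by_contra hbad
  push_neg at hbad
  have hbad2 : ∀ t : ℤ, ∃ x : α, l x0 ≤ t → t + 1 ≤ r x0 →
      ((∃ y, x < y ∧ l y = t + 1) ∧ r x = t) := by
    intro t
    by_cases h : l x0 ≤ t ∧ t + 1 ≤ r x0
    · obtain ⟨x, y, hxy, hrx, hly⟩ := hbad t h.1 h.2
      exact ⟨x, fun _ _ => ⟨⟨y, hxy, hly⟩, hrx⟩⟩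
    · exact ⟨x0, fun ha hb => absurd ⟨ha, hb⟩ h⟩
  choose X hX using hbad2
  -- key facts for t in range
  have hfacts : ∀ t : ℤ, l x0 ≤ t → t + 1 ≤ r x0 →
      lc x0 ≤ rc (X t) ∧ rc (X t) < rc x0 ∧ r (X t) = t ∧
        ∃ y, rc (X t) + 1 ≤ lc y ∧ l y = t + 1 ∧ lc y ≤ rc x0 := by
    intro t ht1 ht2
    obtain ⟨⟨y, hxy, hly⟩, hrx⟩ := hX t ht1 ht2
    have hnx : ¬ X t < x0 := by
      intro h; have := h2 _ _ h; omega
    have hlcx : lc x0 ≤ rc (X t) := by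
      by_contra h; push_neg at h; exact hnx ((hcrep _ _).2 (by omega))
    have hny : ¬ x0 < y := by
      intro h; have := h2 _ _ h; omega
    have hlcy : lc y ≤ rc x0 := by
      by_contra h; push_neg at h; exact hny ((hcrep _ _).2 (by omega))
    have hcxy := (hcrep _ _).1 hxy
    exact ⟨hlcx, by omega, hrx, y, hcxy, hly, hlcy⟩
  -- pigeonhole
  have hmap : ∀ t ∈ Finset.Icc (l x0) (r x0 - 1),
      rc (X t) ∈ (Finset.Icc (lc x0) (rc x0)).erase (rc x0) := by
    intro t ht
    rw [Finset.mem_Icc] at ht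
    obtain ⟨ha, hb, _, _⟩ := hfacts t ht.1 (by omega)
    rw [Finset.mem_erase, Finset.mem_Icc]
    exact ⟨by omega, ha, by omega⟩
  have hcard : ((Finset.Icc (lc x0) (rc x0)).erase (rc x0)).card <
      (Finset.Icc (l x0) (r x0 - 1)).card := by
    rw [Finset.card_erase_of_mem (by rw [Finset.mem_Icc]; exact ⟨hclr x0, le_refl _⟩)]
    rw [Nat.card_Icc, Int.card_Icc]
    have := hclr x0
    omega
  obtain ⟨t, ht, t', ht', hne, heq⟩ :=
    Finset.exists_ne_map_eq_of_card_lt_of_maps_to hcard hmap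
  rw [Finset.mem_Icc] at ht ht'
  -- symmetric contradiction
  have hcontra : ∀ s s' : ℤ, l x0 ≤ s → s + 1 ≤ r x0 → l x0 ≤ s' → s' + 1 ≤ r x0 →
      rc (X s) = rc (X s') → s < s' → False := by
    intro s s' hs1 hs2 hs1' hs2' he hlt
    obtain ⟨_, _, hrs, y, hcy, hly, _⟩ := hfacts s hs1 hs2
    obtain ⟨_, _, hrs', _⟩ := hfacts s' hs1' hs2'
    have : X s' < y := (hcrep _ _).2 (by omega)
    have := h2 _ _ this
    omega
  rcases lt_or_gt_of_ne hne with h | h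
  · exact hcontra t t' ht.1 (by omega) ht'.1 (by omega) heq h
  · exact hcontra t' t ht'.1 (by omega) ht.1 (by omega) heq.symm h


lemma slice_fundExt (hclr : ∀ x, lc x ≤ rc x)
    (hcrep : ∀ x y : α, x < y ↔ rc x + 1 ≤ lc y) (hcm : ∀ x, rc x < m)
    (hcan : ∀ i < m, (∃ x, lc x = i) ∧ (∃ x, rc x = i))
    {l r : α → ℤ} (h1 : ∀ x, l x ≤ r x) (h2 : ∀ x y : α, x < y → r x + 1 ≤ l y)
    (h3 : ∀ x y : α, r x < l y → x < y)
    (t : ℤ) {x0 : α} (hx0 : l x0 ≤ t ∧ t + 1 ≤ r x0) :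
    FundExt m lc rc {x | l x ≤ t ∧ t + 1 ≤ r x} := by
  set S : Set α := {x | l x ≤ t ∧ t + 1 ≤ r x} with hS
  have hPm : ∀ y : α, rc y = m → t + 1 ≤ r y := by
    intro y hy; exact absurd (hcm y) (by omega)
  have hex : ∃ k : ℕ, ∀ y : α, rc y = k → t + 1 ≤ r y := ⟨m, hPm⟩
  set i := Nat.find hex with hi
  have hFspec : ∀ y : α, rc y = i → t + 1 ≤ r y := Nat.find_spec hex
  have hile : i ≤ m := Nat.find_le hPm
  have hF2 : ∀ k, k < i → ∃ y, rc y = k ∧ r y ≤ t := by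
    intro k hk
    have := Nat.find_min hex hk
    push_neg at this
    obtain ⟨y, hy, hry⟩ := this
    exact ⟨y, hy, by omega⟩
  have hF1 : ∀ y : α, i ≤ rc y → t + 1 ≤ r y := by
    intro y hy
    rcases eq_or_lt_of_le hy with h | h
    · exact hFspec y h.symm
    · obtain ⟨z, hz⟩ := (hcan i (h.trans (hcm y))).2
      have := hFspec z hz
      have := rmono hcrep hcm hcan h2 h3 (a := z) (b := y) (by omega)
      omega
  -- claims about members of S
  have ha : ∀ x, x ∈ S → lc x ≤ i := by
    intro x hx
    by_contra h
    push_neg at h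
    obtain ⟨y, hy⟩ := (hcan (lc x - 1) (by have := hcm x; have := hclr x; omega)).2
    have h1' : t + 1 ≤ r y := hF1 y (by omega)
    have hyx : y < x := (hcrep _ _).2 (by omega)
    have := h2 _ _ hyx
    have := hx.1
    omega
  have hb : ∀ x, x ∈ S → i ≤ rc x + 1 := by
    intro x hx
    by_contra h
    push_neg at h
    obtain ⟨y, hy, hry⟩ := hF2 (rc x + 1) (by omega)
    have := rmono hcrep hcm hcan h2 h3 (a := x) (b := y) (by omega)
    have := hx.2
    omega
  have hc : gapSet lc rc i ⊆ S := by
    intro x hx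
    obtain ⟨hx1, hx2⟩ := hx
    obtain ⟨y, hy, hry⟩ := hF2 (lc x) (by omega)
    have : ¬ y < x := by intro h; have := (hcrep _ _).1 h; omega
    have hlx : l x ≤ r y := by
      by_contra h; push_neg at h; exact this (h3 _ _ h)
    exact ⟨by omega, hF1 x hx2⟩
  refine ⟨⟨x0, hx0⟩, i, hile, ?_⟩
  by_cases hR : ∃ y ∈ S, lc y = i
  · -- no leftBorder elements; Z from rightBorder
    obtain ⟨y0, hy0S, hy0⟩ := hR
    have hnoL : ∀ x ∈ S, rc x + 1 ≠ i := by
      intro x hx hxi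
      have hxy : x < y0 := (hcrep _ _).2 (by omega)
      have := h2 _ _ hxy
      have := hx.2; have := hy0S.1
      omega
    refine ⟨{x ∈ S | lc x = i}, Or.inr (fun x hx => hx.2), ?_⟩
    apply Set.Subset.antisymm
    · intro x hx
      rcases Nat.lt_or_ge (rc x) i with h | h
      · exact absurd (by have := hb x hx; omega) (hnoL x hx)
      · rcases eq_or_lt_of_le (ha x hx) with h' | h'
        · exact Or.inr ⟨hx, h'⟩
        · exact Or.inl ⟨by omega, h⟩
    · rintro x (hx | hx)
      · exact hc hx
      · exact hx.1
  · -- Z from leftBorder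
    push_neg at hR
    refine ⟨{x ∈ S | rc x + 1 = i}, Or.inl (fun x hx => hx.2), ?_⟩
    apply Set.Subset.antisymm
    · intro x hx
      rcases Nat.lt_or_ge (rc x) i with h | h
      · exact Or.inr ⟨hx, by have := hb x hx; omega⟩
      · have h' : lc x < i := lt_of_le_of_ne (ha x hx) (hR x hx)
        exact Or.inl ⟨by omega, h⟩
    · rintro x (hx | hx)
      · exact hc hx
      · exact hx.1


/-- adding one Hilbert-set vector to a decomposition -/
lemma decomp_cons {H : Set (α → ℝ)} {w g : α → ℝ} (hg : g ∈ H)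
    (h : ∃ (T : Finset (α → ℝ)) (c : (α → ℝ) → ℕ), ↑T ⊆ H ∧ w = ∑ h ∈ T, (c h : ℝ) • h) :
    ∃ (T : Finset (α → ℝ)) (c : (α → ℝ) → ℕ), ↑T ⊆ H ∧ g + w = ∑ h ∈ T, (c h : ℝ) • h := by
  obtain ⟨T, c, hT, hw⟩ := h
  refine ⟨insert g T, fun h => (if h ∈ T then c h else 0) + (if h = g then 1 else 0),
    ?_, ?_⟩
  · rw [Finset.coe_insert]
    exact Set.insert_subset hg hT
  · have key : ∀ s : Finset (α → ℝ),
        (∑ h ∈ s, ((((if h ∈ T then c h else 0) + (if h = g then 1 else 0) : ℕ) : ℝ)) • h)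
        = (∑ h ∈ s, (((if h ∈ T then c h else 0 : ℕ) : ℝ)) • h)
          + ∑ h ∈ s, (((if h = g then (1:ℕ) else 0 : ℕ) : ℝ)) • h := by
      intro s
      rw [← Finset.sum_add_distrib]
      refine Finset.sum_congr rfl fun h _ => ?_
      push_cast
      rw [add_smul]
    rw [key]
    have h2 : (∑ h ∈ insert g T, (((if h = g then (1:ℕ) else 0 : ℕ) : ℝ)) • h) = g := by
      have : ∀ h ∈ insert g T, (((if h = g then (1:ℕ) else 0 : ℕ) : ℝ)) • h
          = if h = g then g else 0 := by
        intro h _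
        split_ifs with hh
        · subst hh; simp
        · simp
      rw [Finset.sum_congr rfl this, Finset.sum_ite_eq' (insert g T) g (fun _ => g)]
      simp
    have h1 : (∑ h ∈ insert g T, (((if h ∈ T then c h else 0 : ℕ) : ℝ)) • h)
        = ∑ h ∈ T, ((c h : ℝ)) • h := by
      by_cases hgT : g ∈ T
      · rw [Finset.insert_eq_self.2 hgT]
        exact Finset.sum_congr rfl fun h hh => by rw [if_pos hh]
      · rw [Finset.sum_insert hgT, if_neg hgT]
        simp only [Nat.cast_zero, zero_smul, zero_add]
        exact Finset.sum_congr rfl fun h hh => by rw [if_pos hh]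
    rw [h1, h2, hw, add_comm]


lemma main_decomp (hclr : ∀ x, lc x ≤ rc x)
    (hcrep : ∀ x y : α, x < y ↔ rc x + 1 ≤ lc y) (hcm : ∀ x, rc x < m)
    (hcan : ∀ i < m, (∃ x, lc x = i) ∧ (∃ x, rc x = i)) :
    ∀ (n : ℕ) (l r : α → ℤ), (∀ x, l x ≤ r x) → (∀ x y : α, x < y → r x + 1 ≤ l y) →
      (∀ x y : α, r x < l y → x < y) →
      (∑ x, ((r x - l x) - ((rc x : ℤ) - (lc x : ℤ)))).toNat ≤ n →
      ∃ (T : Finset (α → ℝ)) (c : (α → ℝ) → ℕ),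
        ↑T ⊆ {v : α → ℝ | ∃ S : Set α, FundExt m lc rc S ∧ v = chiVec S} ∧
        (fun x => ((r x : ℝ) - (l x : ℝ)) - ((rc x : ℝ) - (lc x : ℝ)))
          = ∑ h ∈ T, (c h : ℝ) • h := by
  intro n
  induction n with
  | zero =>
    intro l r h1 h2 h3 hsum
    have hnn : ∀ x, ((rc x : ℤ) - (lc x : ℤ)) ≤ r x - l x :=
      excess_nonneg hclr hcrep hcm hcan h1 h2 h3
    have hz : ∀ x : α, (r x - l x) - ((rc x : ℤ) - (lc x : ℤ)) = 0 := by
      have hle : (∑ x, ((r x - l x) - ((rc x : ℤ) - (lc x : ℤ)))) ≤ 0 := by omega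
      have hpos0 : ∀ y : α, (0:ℤ) ≤ (r y - l y) - ((rc y : ℤ) - (lc y : ℤ)) :=
        fun y => by have := hnn y; omega
      intro x
      have h5 : (r x - l x) - ((rc x : ℤ) - (lc x : ℤ))
          ≤ ∑ y, ((r y - l y) - ((rc y : ℤ) - (lc y : ℤ))) :=
        Finset.single_le_sum (fun y _ => hpos0 y) (Finset.mem_univ x)
      have := hnn x
      omega
    refine ⟨∅, fun _ => 0, by simp, ?_⟩
    funext x
    have h0 := hz x
    simp only [Finset.sum_empty]
    have h0' := congrArg (fun z : ℤ => (z : ℝ)) h0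
    push_cast at h0'
    simpa using h0'
  | succ n ih =>
    intro l r h1 h2 h3 hsum
    have hnn : ∀ x, ((rc x : ℤ) - (lc x : ℤ)) ≤ r x - l x :=
      excess_nonneg hclr hcrep hcm hcan h1 h2 h3
    by_cases hzero : ∑ x, ((r x - l x) - ((rc x : ℤ) - (lc x : ℤ))) ≤ 0
    · exact ih l r h1 h2 h3 (by omega)
    · push_neg at hzero
      -- some x0 with positive excess
      have hex : ∃ x0, ((rc x0 : ℤ) - (lc x0 : ℤ)) + 1 ≤ r x0 - l x0 := by
        by_contra h
        push_neg at h
        have hle : (∑ x, ((r x - l x) - ((rc x : ℤ) - (lc x : ℤ)))) ≤ 0 :=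
          Finset.sum_nonpos fun x _ => by have := h x; omega
        omega
      obtain ⟨x0, hx0⟩ := hex
      obtain ⟨t, ht1, ht2, hnp⟩ := exists_good_t hclr hcrep hcm hcan h1 h2 h3 hx0
      set l' : α → ℤ := fun x => l x - (if t + 1 ≤ l x then 1 else 0) with hl'
      set r' : α → ℤ := fun x => r x - (if t + 1 ≤ r x then 1 else 0) with hr'
      have h1' : ∀ x, l' x ≤ r' x := by
        intro x; have := h1 x; simp only [hl', hr']; split_ifs <;> omega
      have h2' : ∀ x y : α, x < y → r' x + 1 ≤ l' y := by
        intro x y hxy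
        have := h2 x y hxy
        have hn := hnp x y hxy
        simp only [hl', hr']; split_ifs <;> omega
      have h3' : ∀ x y : α, r' x < l' y → x < y := by
        intro x y hxy
        apply h3 x y
        have hx := h1 x; have hy := h1 y
        simp only [hl', hr'] at hxy; split_ifs at hxy <;> omega
      -- the slice set
      set S : Set α := {x | l x ≤ t ∧ t + 1 ≤ r x} with hSdef
      have hfund : FundExt m lc rc S :=
        slice_fundExt hclr hcrep hcm hcan h1 h2 h3 t ⟨ht1, ht2⟩
      have hmem : ∀ x : α, x ∈ S ↔ (l x ≤ t ∧ t + 1 ≤ r x) := fun x => Iff.rfl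
      -- excess identity
      have hexc : ∀ x, (r' x - l' x) - ((rc x : ℤ) - (lc x : ℤ))
          = ((r x - l x) - ((rc x : ℤ) - (lc x : ℤ))) - (if l x ≤ t ∧ t + 1 ≤ r x then 1 else 0) := by
        intro x
        have := h1 x
        simp only [hl', hr']
        split_ifs <;> omega
      -- sum decrease
      have hsum' : (∑ x, ((r' x - l' x) - ((rc x : ℤ) - (lc x : ℤ)))).toNat ≤ n := by
        have he : (∑ x, ((r' x - l' x) - ((rc x : ℤ) - (lc x : ℤ))))
            = (∑ x, ((r x - l x) - ((rc x : ℤ) - (lc x : ℤ))))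
              - (∑ x, (if l x ≤ t ∧ t + 1 ≤ r x then (1:ℤ) else 0)) := by
          rw [← Finset.sum_sub_distrib]
          exact Finset.sum_congr rfl fun x _ => hexc x
        have hpos1 : ∀ y : α, (0:ℤ) ≤ (if l y ≤ t ∧ t + 1 ≤ r y then (1:ℤ) else 0) :=
          fun y => by split_ifs <;> omega
        have hpos : (1:ℤ) ≤ ∑ x, (if l x ≤ t ∧ t + 1 ≤ r x then (1:ℤ) else 0) := by
          have h5 : (if l x0 ≤ t ∧ t + 1 ≤ r x0 then (1:ℤ) else 0)
              ≤ ∑ x, (if l x ≤ t ∧ t + 1 ≤ r x then (1:ℤ) else 0) :=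
            Finset.single_le_sum (fun y _ => hpos1 y) (Finset.mem_univ x0)
          rw [if_pos ⟨ht1, ht2⟩] at h5
          exact h5
        have hnn' : ∀ x, ((rc x : ℤ) - (lc x : ℤ)) ≤ r' x - l' x :=
          excess_nonneg hclr hcrep hcm hcan h1' h2' h3'
        have hnneg : (0:ℤ) ≤ ∑ x, ((r' x - l' x) - ((rc x : ℤ) - (lc x : ℤ))) :=
          Finset.sum_nonneg fun x _ => by have := hnn' x; omega
        omega
      obtain ⟨T, c, hT, heq⟩ := ih l' r' h1' h2' h3' hsum'
      have hchi : (fun x => ((r x : ℝ) - (l x : ℝ)) - ((rc x : ℝ) - (lc x : ℝ)))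
          = chiVec S + (fun x => ((r' x : ℝ) - (l' x : ℝ)) - ((rc x : ℝ) - (lc x : ℝ))) := by
        funext x
        have hid := hexc x
        have hchix : chiVec S x = if l x ≤ t ∧ t + 1 ≤ r x then (1:ℝ) else 0 := by
          simp only [chiVec, Set.indicator_apply, hSdef, Set.mem_setOf_eq, Pi.one_apply]
        simp only [Pi.add_apply, hchix]
        have hid' := congrArg (fun z : ℤ => (z : ℝ)) hid
        push_cast at hid'
        split_ifs at hid' ⊢ <;> linarith
      rw [hchi]
      exact decomp_cons ⟨S, hfund, rfl⟩ ⟨T, c, hT, heq⟩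


/-- every fundamental extender's characteristic vector lies in Qstar -/
lemma chi_mem_Qstar (hclr : ∀ x, lc x ≤ rc x)
    (hcrep : ∀ x y : α, x < y ↔ rc x + 1 ≤ lc y)
    {S : Set α} (hS : FundExt m lc rc S) : chiVec S ∈ Qstar lc rc := by
  obtain ⟨hne, i, him, Z, hZ, hSeq⟩ := hS
  have hchix : ∀ x, chiVec S x = if x ∈ S then (1:ℝ) else 0 := by
    intro x; simp [chiVec, Set.indicator_apply]
  rcases hZ with hZL | hZR
  · -- Z ⊆ leftBorder: rc z + 1 = i for z ∈ Z
    set a : α → ℕ := fun x => if i ≤ rc x ∨ x ∈ Z then 1 else 0 with ha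
    set b : α → ℕ := fun x => if i ≤ lc x then 1 else 0 with hb
    have haz : ∀ x, x ∈ Z → a x = 1 := fun x hx => if_pos (Or.inr hx)
    have han : ∀ x, x ∉ Z → a x = if i ≤ rc x then 1 else 0 := by
      intro x hx
      rw [ha]
      simp only [or_iff_left hx]
    have hZval : ∀ x, x ∈ Z → rc x + 1 = i := fun x hx => hZL hx
    have key1 : ∀ x, lc x + b x ≤ rc x + a x := by
      intro x
      have hc := hclr x
      by_cases hxZ : x ∈ Z
      · have := hZval x hxZ
        rw [haz x hxZ, hb]
        simp only
        split_ifs <;> omega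
      · rw [han x hxZ, hb]
        simp only
        split_ifs <;> omega
    have key2 : ∀ x y : α, x < y → rc x + a x + 1 ≤ lc y + b y := by
      intro x y hxy
      have hc := (hcrep x y).1 hxy
      by_cases hxZ : x ∈ Z
      · have := hZval x hxZ
        rw [haz x hxZ, hb]
        simp only
        split_ifs <;> omega
      · rw [han x hxZ, hb]
        simp only
        split_ifs <;> omega
    have key3 : ∀ x y : α, rc x + a x < lc y + b y → rc x + 1 ≤ lc y := by
      intro x y hlt
      by_cases hxZ : x ∈ Z
      · have := hZval x hxZ
        rw [haz x hxZ, hb] at hlt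
        simp only at hlt
        split_ifs at hlt <;> omega
      · rw [han x hxZ, hb] at hlt
        simp only at hlt
        split_ifs at hlt <;> omega
    have key4 : ∀ x, (a x : ℤ) - (b x : ℤ) = if x ∈ S then 1 else 0 := by
      intro x
      by_cases hx : x ∈ S
      · rw [if_pos hx]
        rw [hSeq] at hx
        rcases hx with ⟨hx1, hx2⟩ | hx
        · rw [ha, hb]
          simp only
          rw [if_pos (Or.inl hx2), if_neg (by omega)]
          norm_num
        · have := hZval x hx
          have hc := hclr x
          rw [haz x hx, hb]
          simp only
          rw [if_neg (by omega)]
          norm_num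
      · rw [if_neg hx]
        rw [hSeq] at hx
        have hxG : ¬ (lc x + 1 ≤ i ∧ i ≤ rc x) := fun h => hx (Or.inl h)
        have hxZ : x ∉ Z := fun h => hx (Or.inr h)
        have hc := hclr x
        rw [han x hxZ, hb]
        simp only
        split_ifs <;> omega
    refine ⟨fun x => ((lc x + b x : ℕ) : ℝ), fun x => ((rc x + a x : ℕ) : ℝ),
      fun x => by beta_reduce; exact_mod_cast key1 x,
      fun x y h => by beta_reduce; exact_mod_cast key2 x y h,
      fun x y h => (hcrep x y).2 (key3 x y (by beta_reduce at h; exact_mod_cast h)),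
      fun x => ?_⟩
    beta_reduce
    rw [hchix x]
    have h4 := key4 x
    have h4' := congrArg (fun z : ℤ => (z : ℝ)) h4
    push_cast at h4'
    push_cast
    split_ifs at h4' ⊢ <;> linarith
  · -- Z ⊆ rightBorder: lc z = i for z ∈ Z
    set a : α → ℕ := fun x => if i ≤ rc x then 1 else 0 with ha
    set b : α → ℕ := fun x => if i ≤ lc x ∧ x ∉ Z then 1 else 0 with hb
    have hZval : ∀ x, x ∈ Z → lc x = i := fun x hx => hZR hx
    have hbz : ∀ x, x ∈ Z → b x = 0 := fun x hx => if_neg (by rintro ⟨-, h⟩; exact h hx)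
    have hbn : ∀ x, x ∉ Z → b x = if i ≤ lc x then 1 else 0 := by
      intro x hx
      rw [hb]
      simp only [and_iff_left hx]
    have key1 : ∀ x, lc x + b x ≤ rc x + a x := by
      intro x
      have hc := hclr x
      by_cases hxZ : x ∈ Z
      · rw [hbz x hxZ, ha]
        simp only
        split_ifs <;> omega
      · rw [hbn x hxZ, ha]
        simp only
        split_ifs <;> omega
    have key2 : ∀ x y : α, x < y → rc x + a x + 1 ≤ lc y + b y := by
      intro x y hxy
      have hc := (hcrep x y).1 hxy
      by_cases hyZ : y ∈ Z
      · have := hZval y hyZ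
        rw [hbz y hyZ, ha]
        simp only
        split_ifs <;> omega
      · rw [hbn y hyZ, ha]
        simp only
        split_ifs <;> omega
    have key3 : ∀ x y : α, rc x + a x < lc y + b y → rc x + 1 ≤ lc y := by
      intro x y hlt
      by_cases hyZ : y ∈ Z
      · have := hZval y hyZ
        rw [hbz y hyZ, ha] at hlt
        simp only at hlt
        split_ifs at hlt <;> omega
      · rw [hbn y hyZ, ha] at hlt
        simp only at hlt
        split_ifs at hlt <;> omega
    have key4 : ∀ x, (a x : ℤ) - (b x : ℤ) = if x ∈ S then 1 else 0 := by
      intro x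
      by_cases hx : x ∈ S
      · rw [if_pos hx]
        rw [hSeq] at hx
        rcases hx with ⟨hx1, hx2⟩ | hx
        · have hxZ : x ∉ Z := fun h => by have := hZval x h; omega
          rw [hbn x hxZ, ha]
          simp only
          rw [if_pos hx2, if_neg (by omega)]
          norm_num
        · have := hZval x hx
          have hc := hclr x
          rw [hbz x hx, ha]
          simp only
          rw [if_pos (by omega)]
          norm_num
      · rw [if_neg hx]
        rw [hSeq] at hx
        have hxG : ¬ (lc x + 1 ≤ i ∧ i ≤ rc x) := fun h => hx (Or.inl h)
        have hxZ : x ∉ Z := fun h => hx (Or.inr h)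
        have hc := hclr x
        rw [hbn x hxZ, ha]
        simp only
        split_ifs <;> omega
    refine ⟨fun x => ((lc x + b x : ℕ) : ℝ), fun x => ((rc x + a x : ℕ) : ℝ),
      fun x => by beta_reduce; exact_mod_cast key1 x,
      fun x y h => by beta_reduce; exact_mod_cast key2 x y h,
      fun x y h => (hcrep x y).2 (key3 x y (by beta_reduce at h; exact_mod_cast h)),
      fun x => ?_⟩
    beta_reduce
    rw [hchix x]
    have h4 := key4 x
    have h4' := congrArg (fun z : ℤ => (z : ℝ)) h4
    push_cast at h4'
    push_cast
    split_ifs at h4' ⊢ <;> linarith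


end HilbertAux

set_option maxHeartbeats 1000000 in
open Classical in
/-- The characteristic vectors of the fundamental extenders of an interval order form an
integral Hilbert basis of the pointed cone `Q*_P`. -/
theorem stmt_14 {α : Type*} [Fintype α] [PartialOrder α] (m : ℕ) (lc rc : α → ℕ)
    (hclr : ∀ x, lc x ≤ rc x) (hcrep : ∀ x y : α, x < y ↔ rc x + 1 ≤ lc y)
    (hcm : ∀ x, rc x < m) (hcan : ∀ i < m, (∃ x, lc x = i) ∧ (∃ x, rc x = i)) :
    IsHilbertBasis (Qstar lc rc)
      {v : α → ℝ | ∃ S : Set α, FundExt m lc rc S ∧ v = chiVec S} := by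
  refine ⟨?_, ?_, ?_, ?_⟩
  · apply Set.Finite.subset (Set.finite_range (chiVec (α := α)))
    rintro v ⟨S, -, rfl⟩
    exact ⟨S, rfl⟩
  · rintro v ⟨S, hS, rfl⟩
    exact chi_mem_Qstar hclr hcrep hS
  · rintro h ⟨S, -, rfl⟩ x
    refine ⟨if x ∈ S then 1 else 0, ?_⟩
    by_cases hx : x ∈ S <;> simp [chiVec, Set.indicator_apply, hx]
  · rintro v ⟨l, r, h1, h2, h3, hv⟩ hint
    choose z hz using hint
    have hlen : ∀ x, r x = l x + ((z x + (rc x : ℤ) - (lc x : ℤ) : ℤ) : ℝ) := by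
      intro x
      have := hv x
      rw [hz x] at this
      push_cast
      linarith
    have hRL : ∀ x, ((⌈r x⌉ : ℝ) - (⌈l x⌉ : ℝ)) = r x - l x := by
      intro x
      have hc : (⌈r x⌉ : ℤ) = ⌈l x⌉ + (z x + (rc x : ℤ) - (lc x : ℤ)) := by
        rw [hlen x, Int.ceil_add_intCast]
      rw [hc]
      push_cast
      rw [hlen x]
      push_cast
      ring
    have h1' : ∀ x, (⌈l x⌉ : ℤ) ≤ ⌈r x⌉ := fun x => Int.ceil_le_ceil (h1 x)
    have h2' : ∀ x y : α, x < y → (⌈r x⌉ : ℤ) + 1 ≤ ⌈l y⌉ := by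
      intro x y hxy
      have h := Int.ceil_le_ceil (h2 x y hxy)
      rw [Int.ceil_add_one] at h
      exact h
    have h3' : ∀ x y : α, (⌈r x⌉ : ℤ) < ⌈l y⌉ → x < y := by
      intro x y hxy
      apply h3 x y
      by_contra h
      push_neg at h
      have := Int.ceil_le_ceil h
      omega
    obtain ⟨T, c, hT, heq⟩ := main_decomp hclr hcrep hcm hcan
      (∑ x, ((⌈r x⌉ - ⌈l x⌉) - ((rc x : ℤ) - (lc x : ℤ)))).toNat
      (fun x => ⌈l x⌉) (fun x => ⌈r x⌉) h1' h2' h3' (le_refl _)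
    refine ⟨T, c, hT, ?_⟩
    rw [← heq]
    funext x
    rw [hv x, ← hRL x]
end

section
/- In the Hilbert extender graph H of an interval order, if (a, v, b) is an induced path on three vertices (a adjacent to v, v adjacent to b, a not adjacent to b), and the Hilbert set S_v has a gap decomposition S_v = G_i ∪ Z, then the gap set G_i is nonempty. -/
lemma qstar_nonneg {α : Type*} [PartialOrder α] (m : ℕ) (lc rc : α → ℕ)
    (hclr : ∀ x, lc x ≤ rc x) (hcrep : ∀ x y : α, x < y ↔ rc x + 1 ≤ lc y)
    (hcm : ∀ x, rc x < m) (hcan : ∀ i < m, (∃ x, lc x = i) ∧ (∃ x, rc x = i))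
    {ρ : α → ℝ} (hρ : ρ ∈ Qstar lc rc) (x : α) : 0 ≤ ρ x := by
  obtain ⟨l, r, h1, h2, h3, h4⟩ := hρ
  have key : ∀ d : ℕ, ∀ x y : α, lc y ≤ rc x → rc x - lc y = d → l y + (d : ℝ) ≤ r x := by
    intro d
    induction d with
    | zero =>
      intro x y hle _
      have hnlt : ¬ x < y := fun hxy => by have := (hcrep x y).mp hxy; omega
      have h5 : l y ≤ r x := not_lt.mp (fun hr => hnlt (h3 _ _ hr))
      clear hnlt
      push_cast
      linarith
    | succ d ih =>
      intro x y hle hd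
      obtain ⟨u, hu⟩ := (hcan (rc x - 1) (by have := hcm x; omega)).2
      obtain ⟨v, hv⟩ := (hcan (rc x) (hcm x)).1
      have hih : l y + (d : ℝ) ≤ r u := ih u y (by omega) (by omega)
      have huv : u < v := (hcrep u v).mpr (by omega)
      have h2uv := h2 u v huv
      have hnxv : ¬ x < v := fun hxy => by have := (hcrep x v).mp hxy; omega
      have hvx : l v ≤ r x := not_lt.mp (fun hr => hnxv (h3 _ _ hr))
      clear hnxv huv
      push_cast
      linarith
  have hk := key (rc x - lc x) x x (hclr x) rfl
  have hc : ((rc x - lc x : ℕ) : ℝ) = (rc x : ℝ) - (lc x : ℝ) := by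
    have := hclr x; push_cast [Nat.cast_sub this]; ring
  rw [h4 x]
  rw [hc] at hk
  linarith

lemma chi_mem_qstar {α : Type*} [PartialOrder α] (lc rc : α → ℕ)
    (hclr : ∀ x, lc x ≤ rc x) (hcrep : ∀ x y : α, x < y ↔ rc x + 1 ≤ lc y)
    (i : ℕ) (hgap : gapSet lc rc i = ∅)
    (W : Set α) (hW : W ⊆ leftBorder rc i ∨ W ⊆ rightBorder lc i) :
    chiVec W ∈ Qstar lc rc := by
  classical
  have hg : ∀ x, i ≤ rc x → i ≤ lc x := by
    intro x hx
    have := Set.eq_empty_iff_forall_notMem.mp hgap x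
    simp only [gapSet, Set.mem_setOf_eq, not_and] at this
    omega
  rcases hW with hWl | hWr
  · -- left border: rc x + 1 = i for x ∈ W; extend right endpoints into stretched gap
    set L : α → ℕ := fun x => lc x + (if i ≤ lc x then 1 else 0) with hL
    set R : α → ℕ := fun x => rc x + (if i ≤ rc x ∨ x ∈ W then 1 else 0) with hR
    refine ⟨fun x => (L x : ℝ), fun x => (R x : ℝ), ?_, ?_, ?_, ?_⟩
    · intro x
      have := hclr x
      simp only [hL, hR, Nat.cast_le]
      split_ifs with h1 h2 <;> omega
    · intro x y hxy
      have hord := (hcrep x y).mp hxy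
      have : R x + 1 ≤ L y := by
        by_cases hx : x ∈ W
        · have hxb := hWl hx
          simp only [leftBorder, Set.mem_setOf_eq] at hxb
          simp only [hL, hR, hx, or_true, if_true]
          split_ifs <;> omega
        · simp only [hL, hR, hx, or_false]
          split_ifs <;> omega
      have h := (Nat.cast_le (α := ℝ)).mpr this
      push_cast at h
      exact h
    · intro x y hxy
      have hlt : R x < L y := Nat.cast_lt.mp hxy
      refine (hcrep x y).mpr ?_
      by_cases hx : x ∈ W
      · have hxb := hWl hx
        simp only [leftBorder, Set.mem_setOf_eq] at hxb
        simp only [hL, hR, hx, or_true, if_true] at hlt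
        split_ifs at hlt <;> omega
      · simp only [hL, hR, hx, or_false] at hlt
        split_ifs at hlt <;> omega
    · intro x
      by_cases hx : x ∈ W
      · have hxb := hWl hx
        simp only [leftBorder, Set.mem_setOf_eq] at hxb
        have h1 : ¬ i ≤ lc x := by have := hclr x; omega
        have h2 : ¬ i ≤ rc x := by omega
        simp only [chiVec, Set.indicator_of_mem hx, Pi.one_apply, hL, hR, hx, or_true,
          if_true, h1, if_false]
        push_cast
        ring
      · have h0 : chiVec W x = 0 := Set.indicator_of_notMem hx _
        rcases le_or_gt i (rc x) with h1 | h1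
        · have h2 := hg x h1
          simp only [h0, hL, hR, hx, or_false, h1, h2, if_true]
          push_cast
          ring
        · have h2 : ¬ i ≤ lc x := by have := hclr x; omega
          simp only [h0, hL, hR, hx, or_false, not_le.mpr h1, h2, if_false]
          push_cast
          ring
  · -- right border: lc x = i for x ∈ W; extend left endpoints into stretched gap
    set L : α → ℕ := fun x => lc x + (if i ≤ lc x ∧ x ∉ W then 1 else 0) with hL
    set R : α → ℕ := fun x => rc x + (if i ≤ rc x then 1 else 0) with hR
    refine ⟨fun x => (L x : ℝ), fun x => (R x : ℝ), ?_, ?_, ?_, ?_⟩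
    · intro x
      have := hclr x
      simp only [hL, hR, Nat.cast_le]
      by_cases hx : x ∈ W
      · simp only [hx, not_true, and_false, if_false]
        split_ifs <;> omega
      · simp only [hx, not_false_iff, and_true]
        split_ifs <;> omega
    · intro x y hxy
      have hord := (hcrep x y).mp hxy
      have : R x + 1 ≤ L y := by
        by_cases hy : y ∈ W
        · have hyb := hWr hy
          simp only [rightBorder, Set.mem_setOf_eq] at hyb
          simp only [hL, hR, hy, not_true, and_false, if_false]
          split_ifs <;> omega
        · simp only [hL, hR, hy, not_false_iff, and_true]
          split_ifs <;> omega
      have h := (Nat.cast_le (α := ℝ)).mpr this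
      push_cast at h
      exact h
    · intro x y hxy
      have hlt : R x < L y := Nat.cast_lt.mp hxy
      refine (hcrep x y).mpr ?_
      by_cases hy : y ∈ W
      · have hyb := hWr hy
        simp only [rightBorder, Set.mem_setOf_eq] at hyb
        simp only [hL, hR, hy, not_true, and_false, if_false] at hlt
        split_ifs at hlt <;> omega
      · simp only [hL, hR, hy, not_false_iff, and_true] at hlt
        split_ifs at hlt <;> omega
    · intro x
      by_cases hx : x ∈ W
      · have hxb := hWr hx
        simp only [rightBorder, Set.mem_setOf_eq] at hxb
        have h1 : i ≤ rc x := by have := hclr x; omega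
        simp only [chiVec, Set.indicator_of_mem hx, Pi.one_apply, hL, hR, hx, not_true,
          and_false, if_false, h1, if_true]
        push_cast
        ring
      · have h0 : chiVec W x = 0 := Set.indicator_of_notMem hx _
        rcases le_or_gt i (rc x) with h1 | h1
        · have h2 := hg x h1
          simp only [h0, hL, hR, hx, not_false_iff, and_true, h1, h2, if_true]
          push_cast
          ring
        · have h2 : ¬ i ≤ lc x := by have := hclr x; omega
          simp only [h0, hL, hR, hx, not_false_iff, and_true, not_le.mpr h1, h2, if_false]
          push_cast
          ring

lemma combine_decomp {β : Type*} [DecidableEq (β → ℝ)] (T1 T2 : Finset (β → ℝ))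
    (c1 c2 : (β → ℝ) → ℕ) (k : ℕ) :
    (∑ h ∈ T1, (c1 h : ℝ) • h) + k • (∑ h ∈ T2, (c2 h : ℝ) • h)
      = ∑ h ∈ T1 ∪ T2,
          ((((if h ∈ T1 then c1 h else 0) + k * (if h ∈ T2 then c2 h else 0) : ℕ)) : ℝ) • h := by
  have e1 : (∑ h ∈ T1, (c1 h : ℝ) • h)
      = ∑ h ∈ T1 ∪ T2, (if h ∈ T1 then (c1 h : ℝ) • h else 0) := by
    rw [Finset.sum_ite_mem, Finset.union_inter_cancel_left]
  have e2 : (∑ h ∈ T2, (c2 h : ℝ) • h)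
      = ∑ h ∈ T1 ∪ T2, (if h ∈ T2 then (c2 h : ℝ) • h else 0) := by
    rw [Finset.sum_ite_mem, Finset.union_inter_cancel_right]
  rw [e1, e2, Finset.smul_sum, ← Finset.sum_add_distrib]
  refine Finset.sum_congr rfl fun h hh => ?_
  push_cast
  rw [add_smul, mul_smul]
  split_ifs <;>
    simp [← Nat.cast_smul_eq_nsmul ℝ, smul_smul]

/-- If `(A, V, B)` is an induced 3-path in the Hilbert extender graph (adjacency =
nonempty intersection of Hilbert sets) and `V = G i ∪ Z` is a gap decomposition of the
middle Hilbert set, then the gap set `G i` is nonempty. -/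
theorem stmt_15 {α : Type*} [Fintype α] [PartialOrder α] (m : ℕ) (lc rc : α → ℕ)
    (hclr : ∀ x, lc x ≤ rc x) (hcrep : ∀ x y : α, x < y ↔ rc x + 1 ≤ lc y)
    (hcm : ∀ x, rc x < m) (hcan : ∀ i < m, (∃ x, lc x = i) ∧ (∃ x, rc x = i))
    (A V B : Set α)
    (hA : HilbertSet m lc rc A) (hV : HilbertSet m lc rc V) (hB : HilbertSet m lc rc B)
    (hAV : A ≠ V) (hAVadj : (A ∩ V).Nonempty)
    (hVB : V ≠ B) (hVBadj : (V ∩ B).Nonempty)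
    (hABne : A ≠ B) (hABnonadj : A ∩ B = ∅)
    (i : ℕ) (hi : i ≤ m) (Z : Set α)
    (hZ : Z ⊆ leftBorder rc i ∨ Z ⊆ rightBorder lc i)
    (hdec : V = gapSet lc rc i ∪ Z) :
    (gapSet lc rc i).Nonempty := by
  classical
  by_contra hne
  have hgap : gapSet lc rc i = ∅ := Set.not_nonempty_iff_eq_empty.mp hne
  have hVZ : V = Z := by rw [hdec, hgap, Set.empty_union]
  obtain ⟨a, haA, haV⟩ := hAVadj
  obtain ⟨b, hbV, hbB⟩ := hVBadj
  have hab : a ≠ b := by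
    rintro rfl
    have : a ∈ A ∩ B := ⟨haA, hbB⟩
    rw [hABnonadj] at this
    exact this
  obtain ⟨hfund, H, ⟨⟨hHfin, hHsub, hHint, hHdec⟩, hmin⟩, hVH⟩ := hV
  have hHnn : ∀ h ∈ H, ∀ x, 0 ≤ h x := fun h hh =>
    qstar_nonneg m lc rc hclr hcrep hcm hcan (hHsub hh)
  -- the two pieces
  have hW1Z : ({a} : Set α) ⊆ Z := by
    intro x hx
    rw [Set.mem_singleton_iff] at hx
    subst hx
    exact hVZ ▸ haV
  have hW2Z : (V \ {a} : Set α) ⊆ Z := fun x hx => hVZ ▸ hx.1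
  have hmem1 : chiVec ({a} : Set α) ∈ Qstar lc rc :=
    chi_mem_qstar lc rc hclr hcrep i hgap _ (hZ.imp hW1Z.trans hW1Z.trans)
  have hmem2 : chiVec (V \ {a} : Set α) ∈ Qstar lc rc :=
    chi_mem_qstar lc rc hclr hcrep i hgap _ (hZ.imp hW2Z.trans hW2Z.trans)
  have hint : ∀ (W : Set α) (x : α), ∃ z : ℤ, chiVec W x = (z : ℝ) := by
    intro W x
    by_cases h : x ∈ W
    · exact ⟨1, by simp [chiVec, Set.indicator_of_mem h]⟩
    · exact ⟨0, by simp [chiVec, Set.indicator_of_notMem h]⟩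
  obtain ⟨T1, c1, hT1, hd1⟩ := hHdec _ hmem1 (hint _)
  obtain ⟨T2, c2, hT2, hd2⟩ := hHdec _ hmem2 (hint _)
  -- coefficients of chiVec V vanish in these decompositions
  have hcoef : ∀ (T : Finset (α → ℝ)) (c : (α → ℝ) → ℕ) (W : Set α) (w : α),
      ↑T ⊆ H → chiVec W = ∑ h ∈ T, (c h : ℝ) • h → w ∉ W → w ∈ V →
      chiVec V ∈ T → c (chiVec V) = 0 := by
    intro T c W w hTH hdW hwW hwV hmem
    have hW0 : chiVec W w = 0 := Set.indicator_of_notMem hwW _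
    have hs : ∑ h ∈ T, (c h : ℝ) * h w = 0 := by
      have := congrFun hdW w
      rw [hW0] at this
      simpa [Finset.sum_apply] using this.symm
    have hterm := (Finset.sum_eq_zero_iff_of_nonneg
      (fun h hh => mul_nonneg (Nat.cast_nonneg _) (hHnn h (hTH hh) w))).mp hs
      (chiVec V) hmem
    have hV1 : chiVec V w = 1 := by simp [chiVec, Set.indicator_of_mem hwV]
    rw [hV1, mul_one] at hterm
    exact_mod_cast hterm
  have hc1 : chiVec V ∈ T1 → c1 (chiVec V) = 0 := fun hm =>
    hcoef T1 c1 _ b hT1 hd1 (by simp [Ne.symm hab]) hbV hm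
  have hc2 : chiVec V ∈ T2 → c2 (chiVec V) = 0 := fun hm =>
    hcoef T2 c2 _ a hT2 hd2 (by simp) haV hm
  -- decomposition of chiVec V avoiding itself
  have hsplit : chiVec V = chiVec ({a} : Set α) + chiVec (V \ {a} : Set α) := by
    funext x
    by_cases hx : x ∈ V
    · by_cases hxa : x = a
      · subst hxa
        simp [chiVec, Set.indicator_apply, hx]
      · simp [chiVec, Set.indicator_apply, hx, hxa]
    · have hxa : x ≠ a := fun h => hx (h ▸ haV)
      simp [chiVec, Set.indicator_apply, hx, hxa]
  set cv : (α → ℝ) → ℕ :=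
    fun h => (if h ∈ T1 then c1 h else 0) + 1 * (if h ∈ T2 then c2 h else 0) with hcv
  have hcvV : cv (chiVec V) = 0 := by
    simp only [hcv, one_mul]
    rcases Classical.em (chiVec V ∈ T1) with h1 | h1 <;>
      rcases Classical.em (chiVec V ∈ T2) with h2 | h2 <;>
      simp [h1, h2, hc1, hc2]
  set Tv : Finset (α → ℝ) := (T1 ∪ T2).erase (chiVec V) with hTv
  have hχdec : chiVec V = ∑ h ∈ Tv, (cv h : ℝ) • h := by
    rw [hsplit, hd1, hd2]
    have := combine_decomp T1 T2 c1 c2 1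
    rw [one_smul] at this
    rw [this, hTv]
    rw [Finset.sum_erase]
    rw [hcvV]
    simp
  have hTvH : ∀ h ∈ Tv, h ∈ H ∧ h ≠ chiVec V := by
    intro h hh
    rw [hTv, Finset.mem_erase] at hh
    rcases Finset.mem_union.mp hh.2 with h1 | h1
    · exact ⟨hT1 h1, hh.1⟩
    · exact ⟨hT2 h1, hh.1⟩
  -- H minus chiVec V is still a Hilbert basis
  have hbasis' : IsHilbertBasis (Qstar lc rc) (H \ {chiVec V}) := by
    refine ⟨hHfin.subset Set.diff_subset, fun h hh => hHsub hh.1,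
      fun h hh => hHint h hh.1, ?_⟩
    intro v hv hvint
    obtain ⟨T, c, hT, hvd⟩ := hHdec v hv hvint
    set k : ℕ := if chiVec V ∈ T then c (chiVec V) else 0 with hk
    have hv2 : v = (∑ h ∈ T.erase (chiVec V), (c h : ℝ) • h) + k • chiVec V := by
      by_cases hm : chiVec V ∈ T
      · rw [hvd, ← Finset.sum_erase_add T _ hm, hk, if_pos hm,
          Nat.cast_smul_eq_nsmul]
      · rw [hvd, Finset.erase_eq_of_notMem hm, hk, if_neg hm, zero_smul, add_zero]
    have hv3 : v = (∑ h ∈ T.erase (chiVec V), (c h : ℝ) • h)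
        + k • (∑ h ∈ Tv, (cv h : ℝ) • h) := by rw [← hχdec]; exact hv2
    rw [combine_decomp (T.erase (chiVec V)) Tv c cv k] at hv3
    clear hv2
    refine ⟨T.erase (chiVec V) ∪ Tv, _, ?_, hv3⟩
    intro h hh
    rcases Finset.mem_union.mp hh with h1 | h1
    · exact ⟨hT (Finset.erase_subset _ _ h1), Finset.ne_of_mem_erase h1⟩
    · exact ⟨(hTvH h h1).1, (hTvH h h1).2⟩
  have heq := hmin _ Set.diff_subset hbasis'
  have : chiVec V ∈ H \ {chiVec V} := by rw [heq]; exact hVH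
  exact this.2 rfl
end
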